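/- arXiv:0910.4573 — 2 statements merged into one kernel-verified Lean document; each statement's English description precedes it below -/
import Mathlib

section
/- Let c_n denote the number of level one cheesy polyominoes with area n (counted up to translation). Then c_1 = 1, c_2 = 3, c_3 = 11, and for every n ≥ 4 one has c_n = 6·c_{n−1} − 8·c_{n−2} + c_{n−3}. -/
open Finset Filter

noncomputable section

/-- A cell of the hexagonal lattice, modelled as a point of ℤ². -/
abbrev Cell : Type := ℤ × ℤ

/-- Hexagonal adjacency on ℤ². -/
def HexAdj (a b : Cell) : Prop :=
  (b.1 - a.1, b.2 - a.2) ∈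
    ({(1,0), (-1,0), (0,1), (0,-1), (1,1), (-1,-1)} : Set (ℤ × ℤ))

/-- A (hexagonal-celled) polyomino: a finite nonempty set of cells,
connected under hexagonal adjacency. -/
def IsPolyomino (P : Finset Cell) : Prop :=
  P.Nonempty ∧ ∀ a ∈ P, ∀ b ∈ P,
    Relation.ReflTransGen (fun u v : Cell => u ∈ P ∧ v ∈ P ∧ HexAdj u v) a b

/-- The canonical representative of a translation class: both the minimal
abscissa and the minimal ordinate are `0`. -/
def Normalized (P : Finset Cell) : Prop :=
  (∀ c ∈ P, 0 ≤ c.1 ∧ 0 ≤ c.2) ∧ (∃ c ∈ P, c.1 = 0) ∧ (∃ c ∈ P, c.2 = 0)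

/-- Ordinates of the cells of the column of `P` at abscissa `x`. -/
def columnYs (P : Finset Cell) (x : ℤ) : Finset ℤ :=
  (P.filter (fun c => c.1 = x)).image Prod.snd

/-- Number of connected components (maximal runs of consecutive integers) of a
finite set of integers: each component is counted via its least element. -/
def numComponents (s : Finset ℤ) : ℕ := (s.filter (fun a => a - 1 ∉ s)).card

/-- Every nonempty column has exactly one connected component. -/
def ColumnConvex (P : Finset Cell) : Prop :=
  ∀ x : ℤ, (columnYs P x).Nonempty → numComponents (columnYs P x) = 1

/-- `a` and `b` lie in the same connected component of `s`. -/
def SameComp (s : Finset ℤ) (a b : ℤ) : Prop :=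
  a ∈ s ∧ b ∈ s ∧ ∀ c : ℤ, min a b ≤ c → c ≤ max a b → c ∈ s

/-- The leftmost nonempty column has exactly one connected component and, for
every pair of nonempty columns at consecutive abscissas `x`, `x+1`, every
connected component of the column at `x+1` contains a cell adjacent to some
cell of the column at `x`. -/
def RightwardSemiDirected (P : Finset Cell) : Prop :=
  (∀ x : ℤ, (columnYs P x).Nonempty → (∀ x' : ℤ, x' < x → columnYs P x' = ∅) →
      numComponents (columnYs P x) = 1) ∧
  (∀ x : ℤ, (columnYs P x).Nonempty → (columnYs P (x+1)).Nonempty →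
      ∀ b ∈ columnYs P (x+1), ∃ b' ∈ columnYs P (x+1),
        SameComp (columnYs P (x+1)) b b' ∧
        ∃ c ∈ columnYs P x, HexAdj (x, c) (x+1, b'))

/-- The cells of the gap(s) of a column: the integers between the least and the
greatest element that do not belong to the column. -/
def gapCells (s : Finset ℤ) : Finset ℤ :=
  Finset.Icc (WithTop.untopD 0 s.min) (WithBot.unbotD 0 s.max) \ s

def gapSize (s : Finset ℤ) : ℕ := (gapCells s).card

/-- Level `m` cheesy polyomino. -/
def IsCheesy (m : ℕ) (P : Finset Cell) : Prop :=
  IsPolyomino P ∧ RightwardSemiDirected P ∧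
  ∀ x : ℤ, numComponents (columnYs P x) ≤ 2 ∧
    (numComponents (columnYs P x) = 2 → gapSize (columnYs P x) ≤ m)

/-- Height of a (nonempty) column: max − min + 1. -/
def heightN (s : Finset ℤ) : ℕ :=
  (WithBot.unbotD 0 s.max - WithTop.untopD 0 s.min + 1).toNat

/-- The maximal abscissa of a polyomino. -/
def maxX (P : Finset Cell) : ℤ := WithBot.unbotD 0 (P.image Prod.fst).max

/-- The last column (ordinates of the column of maximal abscissa). -/
def lastCol (P : Finset Cell) : Finset ℤ := columnYs P (maxX P)

/-- Number of level `m` cheesy polyominoes with area `n`, counted up to translation. -/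
def cheesyCount (m n : ℕ) : ℕ :=
  Nat.card {P : Finset Cell // IsCheesy m P ∧ Normalized P ∧ P.card = n}

/-!
Removing the last column of a level one cheesy polyomino leaves a smaller one, and conversely a
column of `κ` cells can follow a last column of height `h` in exactly `κ h + 1` ways: as one of
the `κ + h` intervals meeting its shadow `[min, max + 1]`, or as one of the `(κ - 1)(h - 1)`
columns with a one-cell gap whose two components both meet it. Writing `c n` for the number of
polyominoes of area `n` and `d n` for the sum of the heights of their last columns, this gives
  `c n = 1 + ∑_{j<n} ((n - j) d j + c j)`,
  `d n = n + ∑_{j<n} (((n - j)² + (n - j) - 1) d j + c j)`,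
the leading terms accounting for the vertical bar. Taking finite differences eliminates `d` and
leaves a recurrence with characteristic polynomial `(x - 1)(x³ - 6x² + 8x - 1)`; the initial
values kill the factor `x - 1`.
-/

namespace Cheesy

/-- The lower bound used by `gapCells`, with the junk value `0` on `∅` (as for `maxD`). -/
def minD (s : Finset ℤ) : ℤ := WithTop.untopD 0 s.min

def maxD (s : Finset ℤ) : ℤ := WithBot.unbotD 0 s.max

section IntegerColumns

variable {s : Finset ℤ} {a b g y : ℤ}

lemma minD_eq_min' (h : s.Nonempty) : minD s = s.min' h := by
  rw [minD, ← Finset.coe_min' h]; rfl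

lemma maxD_eq_max' (h : s.Nonempty) : maxD s = s.max' h := by
  rw [maxD, ← Finset.coe_max' h]; rfl

lemma minD_mem (h : s.Nonempty) : minD s ∈ s := by
  rw [minD_eq_min' h]; exact s.min'_mem h

lemma maxD_mem (h : s.Nonempty) : maxD s ∈ s := by
  rw [maxD_eq_max' h]; exact s.max'_mem h

lemma minD_le (hy : y ∈ s) : minD s ≤ y := by
  rw [minD_eq_min' ⟨y, hy⟩]; exact s.min'_le y hy

lemma le_maxD (hy : y ∈ s) : y ≤ maxD s := by
  rw [maxD_eq_max' ⟨y, hy⟩]; exact s.le_max' y hy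

lemma minD_le_maxD (h : s.Nonempty) : minD s ≤ maxD s := minD_le (maxD_mem h)

lemma minD_eq_of_mem (ha : a ∈ s) (h : ∀ y ∈ s, a ≤ y) : minD s = a :=
  le_antisymm (minD_le ha) (h _ (minD_mem ⟨a, ha⟩))

lemma maxD_eq_of_mem (hb : b ∈ s) (h : ∀ y ∈ s, y ≤ b) : maxD s = b :=
  le_antisymm (h _ (maxD_mem ⟨b, hb⟩)) (le_maxD hb)

lemma minD_Icc (h : a ≤ b) : minD (Icc a b) = a :=
  minD_eq_of_mem (by simp [h]) fun _ hy => (mem_Icc.1 hy).1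

lemma maxD_Icc (h : a ≤ b) : maxD (Icc a b) = b :=
  maxD_eq_of_mem (by simp [h]) fun _ hy => (mem_Icc.1 hy).2

lemma minD_Icc_sdiff (hag : a < g) (hgb : g < b) : minD (Icc a b \ {g}) = a :=
  minD_eq_of_mem (by simp; omega) fun _ hy => by simp at hy; omega

lemma maxD_Icc_sdiff (hag : a < g) (hgb : g < b) : maxD (Icc a b \ {g}) = b :=
  maxD_eq_of_mem (by simp; omega) fun _ hy => by simp at hy; omega

lemma minD_singleton : minD {a} = a := minD_eq_of_mem (mem_singleton_self a) (by simp)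

lemma mem_gapCells : y ∈ gapCells s ↔ minD s ≤ y ∧ y ≤ maxD s ∧ y ∉ s := by
  rw [gapCells, Finset.mem_sdiff, mem_Icc, and_assoc]; rfl

lemma gapCells_Icc (h : a ≤ b) : gapCells (Icc a b) = ∅ := by
  ext y; simp only [mem_gapCells, minD_Icc h, maxD_Icc h]; simp; omega

lemma gapCells_Icc_sdiff (hag : a < g) (hgb : g < b) : gapCells (Icc a b \ {g}) = {g} := by
  ext y; simp only [mem_gapCells, minD_Icc_sdiff hag hgb, maxD_Icc_sdiff hag hgb]; simp; omega

lemma numComponents_Icc (h : a ≤ b) : numComponents (Icc a b) = 1 := by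
  rw [numComponents, card_eq_one]
  exact ⟨a, by ext y; simp; omega⟩

lemma numComponents_Icc_sdiff (hag : a < g) (hgb : g < b) :
    numComponents (Icc a b \ {g}) = 2 := by
  rw [numComponents, card_eq_two]
  exact ⟨a, g + 1, by omega, by ext y; simp; omega⟩

lemma card_Icc_sdiff (hag : a < g) (hgb : g < b) : (Icc a b \ {g}).card = (b - a).toNat := by
  rw [card_sdiff_of_subset (by simp; omega), Int.card_Icc, card_singleton]
  omega

def IsInterval (s : Finset ℤ) : Prop := ∃ a b, a ≤ b ∧ s = Icc a b

def IsSlit (s : Finset ℤ) : Prop := ∃ a g b, a < g ∧ g < b ∧ s = Icc a b \ {g}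

def IsLevelOneCol (s : Finset ℤ) : Prop := IsInterval s ∨ IsSlit s

lemma IsLevelOneCol.nonempty (h : IsLevelOneCol s) : s.Nonempty := by
  rcases h with ⟨a, b, hab, rfl⟩ | ⟨a, g, b, hag, hgb, rfl⟩
  · exact nonempty_Icc.2 hab
  · exact ⟨a, by simp; omega⟩

lemma two_le_numComponents (hne : s.Nonempty) (hg : g ∈ gapCells s) :
    2 ≤ numComponents s := by
  rw [mem_gapCells] at hg
  have hup : (s.filter (g < ·)).Nonempty :=
    ⟨maxD s, mem_filter.2
      ⟨maxD_mem hne, lt_of_le_of_ne hg.2.1 fun h => hg.2.2 (h ▸ maxD_mem hne)⟩⟩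
  set u := (s.filter (g < ·)).min' hup
  have hu := mem_filter.1 ((s.filter (g < ·)).min'_mem hup)
  have hmin : minD s ∈ s.filter (· - 1 ∉ s) :=
    mem_filter.2 ⟨minD_mem hne, fun h => by have := minD_le h; omega⟩
  have hu' : u ∈ s.filter (· - 1 ∉ s) := by
    refine mem_filter.2 ⟨hu.1, fun h => ?_⟩
    rcases lt_or_eq_of_le (show g ≤ u - 1 by omega) with hlt | heq
    · have := (s.filter (g < ·)).min'_le (u - 1) (mem_filter.2 ⟨h, hlt⟩); omega
    · exact hg.2.2 (heq ▸ h)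
  exact one_lt_card.2 ⟨_, hmin, u, hu', by have := minD_le hu.1; omega⟩

lemma isLevelOneCol_of_numComponents (hne : s.Nonempty) (h2 : numComponents s ≤ 2)
    (hgap : numComponents s = 2 → gapSize s ≤ 1) : IsLevelOneCol s := by
  have hsub : s ⊆ Icc (minD s) (maxD s) := fun y hy => mem_Icc.2 ⟨minD_le hy, le_maxD hy⟩
  rcases (gapCells s).eq_empty_or_nonempty with hempty | ⟨g, hg⟩
  · exact Or.inl ⟨_, _, minD_le_maxD hne, (hsub.antisymm (sdiff_eq_empty_iff_subset.1 hempty))⟩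
  have hsingle : gapCells s = {g} :=
    eq_singleton_iff_unique_mem.2 ⟨hg, fun y hy => card_le_one.1
      (hgap (le_antisymm h2 (two_le_numComponents hne hg))) y hy g hg⟩
  obtain ⟨hg1, hg2, hgs⟩ := mem_gapCells.1 hg
  refine Or.inr ⟨minD s, g, maxD s, lt_of_le_of_ne hg1 fun h => hgs (h ▸ minD_mem hne),
    lt_of_le_of_ne hg2 fun h => hgs (h ▸ maxD_mem hne), ?_⟩
  ext y
  have := congrArg (y ∈ ·) hsingle
  simp only [mem_gapCells, mem_singleton, eq_iff_iff] at this
  simp only [Finset.mem_sdiff, mem_Icc, mem_singleton]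
  constructor
  · intro hy; exact ⟨⟨minD_le hy, le_maxD hy⟩, fun h => hgs (h ▸ hy)⟩
  · rintro ⟨hy, hyg⟩; by_contra hys; exact hyg (this.1 ⟨hy.1, hy.2, hys⟩)

end IntegerColumns

section Shifts

variable {s : Finset ℤ} {a b g t y : ℤ}

lemma mem_image_add : y ∈ s.image (· + t) ↔ y - t ∈ s := by
  simp only [mem_image]
  exact ⟨by rintro ⟨v, hv, rfl⟩; simpa using hv, fun h => ⟨y - t, h, by ring⟩⟩

lemma image_add_Icc_sdiff :
    (Icc a b \ {g}).image (· + t) = Icc (a + t) (b + t) \ {g + t} := by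
  ext y; rw [mem_image_add]; simp; omega

lemma IsInterval.image_add (h : IsInterval s) : IsInterval (s.image (· + t)) := by
  obtain ⟨a, b, hab, rfl⟩ := h
  exact ⟨a + t, b + t, by omega, image_add_right_Icc a b t⟩

lemma IsLevelOneCol.image_add (h : IsLevelOneCol s) : IsLevelOneCol (s.image (· + t)) := by
  rcases h with h | ⟨a, g, b, hag, hgb, rfl⟩
  · exact Or.inl h.image_add
  · exact Or.inr ⟨a + t, g + t, b + t, by omega, by omega, image_add_Icc_sdiff⟩

lemma minD_image_add (h : s.Nonempty) : minD (s.image (· + t)) = minD s + t :=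
  minD_eq_of_mem (mem_image_of_mem _ (minD_mem h)) fun y hy => by
    have := minD_le (mem_image_add.1 hy); omega

lemma maxD_image_add (h : s.Nonempty) : maxD (s.image (· + t)) = maxD s + t :=
  maxD_eq_of_mem (mem_image_of_mem _ (maxD_mem h)) fun y hy => by
    have := le_maxD (mem_image_add.1 hy); omega

lemma image_add_neg_image_add : (s.image (· + t)).image (· + -t) = s := by
  ext y; rw [mem_image_add, mem_image_add, sub_neg_eq_add, add_sub_cancel_right]

lemma sameComp_image_add {z : ℤ} (h : SameComp s y z) :
    SameComp (s.image (· + t)) (y + t) (z + t) := by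
  obtain ⟨hy, hz, hmid⟩ := h
  refine ⟨mem_image_of_mem _ hy, mem_image_of_mem _ hz, fun c hc1 hc2 => mem_image_add.2 ?_⟩
  exact hmid (c - t) (by omega) (by omega)

end Shifts

section Adjacency

lemma hexAdj_iff {u v : Cell} : HexAdj u v ↔
    (v.1 - u.1 = 1 ∧ v.2 - u.2 = 0) ∨ (v.1 - u.1 = -1 ∧ v.2 - u.2 = 0) ∨
    (v.1 - u.1 = 0 ∧ v.2 - u.2 = 1) ∨ (v.1 - u.1 = 0 ∧ v.2 - u.2 = -1) ∨
    (v.1 - u.1 = 1 ∧ v.2 - u.2 = 1) ∨ (v.1 - u.1 = -1 ∧ v.2 - u.2 = -1) := by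
  simp [HexAdj]

lemma hexAdj_symm {u v : Cell} (h : HexAdj u v) : HexAdj v u := by
  rw [hexAdj_iff] at h ⊢; omega

lemma hexAdj_succ_iff {x c y : ℤ} : HexAdj (x, c) (x + 1, y) ↔ y = c ∨ y = c + 1 := by
  rw [hexAdj_iff]; dsimp only; omega

lemma hexAdj_vertical (x y : ℤ) : HexAdj (x, y) (x, y + 1) := by
  rw [hexAdj_iff]; dsimp only; omega

abbrev AdjIn (P : Finset Cell) (u v : Cell) : Prop := u ∈ P ∧ v ∈ P ∧ HexAdj u v

instance (P : Finset Cell) : Std.Symm (AdjIn P) :=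
  ⟨fun _ _ h => ⟨h.2.1, h.1, hexAdj_symm h.2.2⟩⟩

/-- Discrete intermediate value theorem along paths in `P`. -/
lemma exists_mem_eq_of_reflTransGen {P : Finset Cell} (f : Cell → ℤ)
    (hf : ∀ u v, HexAdj u v → f v - f u ≤ 1 ∧ f u - f v ≤ 1) {a b : Cell} (ha : a ∈ P)
    (h : Relation.ReflTransGen (AdjIn P) a b) {z : ℤ} (h1 : min (f a) (f b) ≤ z)
    (h2 : z ≤ max (f a) (f b)) : ∃ c ∈ P, f c = z := by
  induction h with
  | refl => exact ⟨a, ha, by omega⟩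
  | @tail b c _ hbc ih =>
    by_cases hz : min (f a) (f b) ≤ z ∧ z ≤ max (f a) (f b)
    · exact ih hz.1 hz.2
    · have := hf _ _ hbc.2.2
      exact ⟨c, hbc.2.1, by omega⟩

lemma reflTransGen_vertical {P : Finset Cell} {x y z : ℤ} (hyz : y ≤ z)
    (h : ∀ t, y ≤ t → t ≤ z → (x, t) ∈ P) :
    Relation.ReflTransGen (AdjIn P) (x, y) (x, z) := by
  induction z, hyz using Int.leInduction with
  | base => exact .refl
  | succ w hw ih =>
    exact (ih fun t ht1 ht2 => h t ht1 (by omega)).tail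
      ⟨h w hw (by omega), h (w + 1) (by omega) le_rfl, hexAdj_vertical x w⟩

end Adjacency

/-- The condition of `RightwardSemiDirected` on consecutive columns `s` and `t`: the neighbours
of `(x + 1, z)` in column `x` are `z - 1` and `z`. -/
def Touches (s t : Finset ℤ) : Prop :=
  ∀ y ∈ t, ∃ z ∈ t, SameComp t y z ∧ (z ∈ s ∨ z - 1 ∈ s)

section Touches

variable {s : Finset ℤ} {a b g y z : ℤ}

lemma sameComp_Icc (hy : y ∈ Icc a b) (hz : z ∈ Icc a b) : SameComp (Icc a b) y z := by
  simp only [mem_Icc] at hy hz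
  refine ⟨mem_Icc.2 hy, mem_Icc.2 hz, fun c h1 h2 => mem_Icc.2 ?_⟩
  simp only [min_le_iff, le_max_iff] at h1 h2
  omega

lemma sameComp_Icc_sdiff (hy : y ∈ Icc a b \ {g}) (hz : z ∈ Icc a b \ {g})
    (hside : y < g ↔ z < g) : SameComp (Icc a b \ {g}) y z := by
  refine ⟨hy, hz, fun c h1 h2 => ?_⟩
  simp only [Finset.mem_sdiff, mem_Icc, mem_singleton, min_le_iff, le_max_iff] at hy hz h1 h2 ⊢
  omega

lemma lt_iff_lt_of_sameComp_Icc_sdiff (h : SameComp (Icc a b \ {g}) y z) : y < g ↔ z < g := by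
  obtain ⟨hy, hz, hmid⟩ := h
  by_contra hc
  have := hmid g (by simp only [min_le_iff]; omega) (by simp only [le_max_iff]; omega)
  simp at this

lemma IsLevelOneCol.mem_or_sub_one_mem_iff (hs : IsLevelOneCol s) :
    y ∈ s ∨ y - 1 ∈ s ↔ minD s ≤ y ∧ y ≤ maxD s + 1 := by
  rcases hs with ⟨a, b, hab, rfl⟩ | ⟨a, g, b, hag, hgb, rfl⟩
  · simp only [minD_Icc hab, maxD_Icc hab, mem_Icc]; omega
  · simp only [minD_Icc_sdiff hag hgb, maxD_Icc_sdiff hag hgb, Finset.mem_sdiff, mem_Icc,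
      mem_singleton]
    omega

lemma touches_Icc_iff (hs : IsLevelOneCol s) (hab : a ≤ b) :
    Touches s (Icc a b) ↔ a ≤ maxD s + 1 ∧ minD s ≤ b := by
  have hs' := minD_le_maxD hs.nonempty
  constructor
  · intro h
    obtain ⟨z, hz, -, hzs⟩ := h a (by simp [hab])
    rw [hs.mem_or_sub_one_mem_iff] at hzs
    simp only [mem_Icc] at hz
    omega
  · rintro ⟨h1, h2⟩ y hy
    have hz : min b (max a (minD s)) ∈ Icc a b := by simp; omega
    refine ⟨_, hz, sameComp_Icc hy hz, hs.mem_or_sub_one_mem_iff.2 ?_⟩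
    simp only [mem_Icc] at hz
    omega

lemma touches_Icc_sdiff_iff (hs : IsLevelOneCol s) (hag : a < g) (hgb : g < b) :
    Touches s (Icc a b \ {g}) ↔ minD s < g ∧ g ≤ maxD s := by
  have hs' := minD_le_maxD hs.nonempty
  constructor
  · intro h
    obtain ⟨z₁, hz₁, hc₁, hs₁⟩ := h a (by simp; omega)
    obtain ⟨z₂, hz₂, hc₂, hs₂⟩ := h b (by simp; omega)
    have := lt_iff_lt_of_sameComp_Icc_sdiff hc₁
    have := lt_iff_lt_of_sameComp_Icc_sdiff hc₂
    rw [hs.mem_or_sub_one_mem_iff] at hs₁ hs₂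
    simp only [Finset.mem_sdiff, mem_Icc, mem_singleton] at hz₁ hz₂
    omega
  · rintro ⟨h1, h2⟩ y hy
    have hy' := hy
    simp only [Finset.mem_sdiff, mem_Icc, mem_singleton] at hy'
    -- the cell of `y`'s component nearest to the shadow `[minD s, maxD s + 1]` of `s`
    let z := if y < g then min (g - 1) (max a (minD s)) else max (g + 1) (minD s)
    have hz :
        (a ≤ z ∧ z ≤ b ∧ z ≠ g) ∧ (y < g ↔ z < g) ∧ minD s ≤ z ∧ z ≤ maxD s + 1 := by
      by_cases hyg : y < g
      · simp only [z, if_pos hyg, max_def, min_def]; split_ifs <;> omega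
      · simp only [z, if_neg hyg, max_def]; split_ifs <;> omega
    have hzmem : z ∈ Icc a b \ {g} := by simpa [and_assoc] using hz.1
    exact ⟨z, hzmem, sameComp_Icc_sdiff hy hzmem hz.2.1, hs.mem_or_sub_one_mem_iff.2 hz.2.2⟩

lemma Touches.image_add {t : Finset ℤ} (h : Touches s t) (c : ℤ) :
    Touches (s.image (· + c)) (t.image (· + c)) := by
  intro y hy
  obtain ⟨z, hz, hcomp, hzs⟩ := h (y - c) (mem_image_add.1 hy)
  refine ⟨z + c, mem_image_of_mem _ hz, by simpa using sameComp_image_add (t := c) hcomp, ?_⟩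
  simp only [mem_image_add, add_sub_cancel_right, show z + c - 1 - c = z - 1 by ring]
  exact hzs

end Touches

section Columns

variable {P : Finset Cell} {x y : ℤ}

lemma mem_columnYs : y ∈ columnYs P x ↔ (x, y) ∈ P := by
  simp only [columnYs, mem_image, mem_filter]
  exact ⟨by rintro ⟨c, ⟨hc, rfl⟩, rfl⟩; exact hc, fun h => ⟨_, ⟨h, rfl⟩, rfl⟩⟩

lemma le_maxX {c : Cell} (hc : c ∈ P) : c.1 ≤ maxX P := le_maxD (mem_image_of_mem _ hc)

lemma exists_fst_eq_maxX (h : P.Nonempty) : ∃ c ∈ P, c.1 = maxX P := by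
  obtain ⟨c, hc, hcx⟩ := mem_image.1 (maxD_mem (h.image Prod.fst))
  exact ⟨c, hc, hcx⟩

lemma maxX_nonneg (hn : Normalized P) : 0 ≤ maxX P := by
  obtain ⟨c, hc, hcx⟩ := hn.2.1
  exact hcx ▸ le_maxX hc

lemma maxX_eq_of_mem {c : Cell} (hc : c ∈ P) (h : ∀ d ∈ P, d.1 ≤ c.1) : maxX P = c.1 :=
  maxD_eq_of_mem (mem_image_of_mem _ hc) (by simpa using h)

lemma reflTransGen_of_sameComp {z : ℤ} (h : SameComp (columnYs P x) y z) :
    Relation.ReflTransGen (AdjIn P) (x, y) (x, z) := by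
  have hmid : ∀ t, min y z ≤ t → t ≤ max y z → (x, t) ∈ P := fun t h1 h2 =>
    mem_columnYs.1 (h.2.2 t h1 h2)
  rcases le_total y z with hyz | hzy
  · exact reflTransGen_vertical hyz fun t h1 h2 => hmid t (by omega) (by omega)
  · exact Std.Symm.symm _ _
      (reflTransGen_vertical hzy fun t h1 h2 => hmid t (by omega) (by omega))

lemma columnYs_maxX_add_one (P : Finset Cell) : columnYs P (maxX P + 1) = ∅ :=
  eq_empty_of_forall_notMem fun _ hy => by have := le_maxX (mem_columnYs.1 hy); simp at this

lemma columnYs_vline (s : Finset ℤ) (v x : ℤ) :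
    columnYs (s.image fun y => (v, y)) x = if x = v then s else ∅ := by
  ext y
  rw [mem_columnYs]
  split_ifs with h
  · simp [h]
  · simpa using fun _ hv => h hv.symm

lemma columnYs_union (P R : Finset Cell) (x : ℤ) :
    columnYs (P ∪ R) x = columnYs P x ∪ columnYs R x := by
  ext y; simp only [mem_columnYs, mem_union]

lemma card_vline (s : Finset ℤ) (v : ℤ) : (s.image fun y => (v, y)).card = s.card :=
  card_image_of_injective _ fun _ _ h => (Prod.mk.injEq _ _ _ _ ▸ h).2

end Columns

/-- The columns `S 0, …, S (w - 1)` of a level one cheesy polyomino whose leftmost column is at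
abscissa `0`. -/
structure CheesyColumns (S : ℤ → Finset ℤ) (w : ℤ) : Prop where
  one_le : 1 ≤ w
  eq_empty : ∀ x, (x < 0 ∨ w ≤ x) → S x = ∅
  first : IsInterval (S 0)
  levelOne : ∀ x, 0 ≤ x → x < w → IsLevelOneCol (S x)
  touches : ∀ x, 0 ≤ x → x + 1 < w → Touches (S x) (S (x + 1))

namespace CheesyColumns

variable {P : Finset Cell} {w : ℤ} (h : CheesyColumns (columnYs P) w)
include h

lemma fst_mem_Ico {c : Cell} (hc : c ∈ P) : 0 ≤ c.1 ∧ c.1 < w := by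
  by_contra hout
  have := h.eq_empty c.1 (by omega) ▸ mem_columnYs.2 hc
  simp at this

lemma nonempty_iff {x : ℤ} : (columnYs P x).Nonempty ↔ 0 ≤ x ∧ x < w := by
  refine ⟨fun ⟨y, hy⟩ => h.fst_mem_Ico (mem_columnYs.1 hy), fun hx => ?_⟩
  exact (h.levelOne x hx.1 hx.2).nonempty

/-- Every cell is joined to the bottom of the first column, going left column by column through
the cell that `Touches` provides. -/
lemma isPolyomino : IsPolyomino P := by
  obtain ⟨a, b, hab, hcol0⟩ := h.first
  have ha : a ∈ columnYs P 0 := hcol0 ▸ mem_Icc.2 ⟨le_rfl, hab⟩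
  have hreach : ∀ x, 0 ≤ x → ∀ y ∈ columnYs P x,
      Relation.ReflTransGen (AdjIn P) (x, y) (0, a) := by
    intro x hx
    induction x, hx using Int.leInduction with
    | base =>
      exact fun y hy =>
        reflTransGen_of_sameComp (hcol0 ▸ sameComp_Icc (hcol0 ▸ hy) (hcol0 ▸ ha))
    | succ x hx ih =>
      intro y hy
      have hxw : x + 1 < w := (h.nonempty_iff.1 ⟨y, hy⟩).2
      obtain ⟨z, hz, hcomp, hzs⟩ := h.touches x hx hxw y hy
      refine (reflTransGen_of_sameComp hcomp).trans ?_
      obtain ⟨z', hz', hadj⟩ : ∃ z' ∈ columnYs P x, HexAdj (x, z') (x + 1, z) := by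
        rcases hzs with hzs | hzs
        · exact ⟨z, hzs, hexAdj_succ_iff.2 (Or.inl rfl)⟩
        · exact ⟨z - 1, hzs, hexAdj_succ_iff.2 (Or.inr (by ring))⟩
      exact .head ⟨mem_columnYs.1 hz, mem_columnYs.1 hz', hexAdj_symm hadj⟩ (ih z' hz')
  have hreach' : ∀ c ∈ P, Relation.ReflTransGen (AdjIn P) c (0, a) := fun c hc =>
    hreach c.1 (h.fst_mem_Ico hc).1 c.2 (mem_columnYs.2 hc)
  exact ⟨⟨_, mem_columnYs.1 ha⟩, fun c hc d hd =>
    (hreach' c hc).trans (Std.Symm.symm _ _ (hreach' d hd))⟩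

lemma rightwardSemiDirected : RightwardSemiDirected P := by
  refine ⟨fun x hx hleft => ?_, fun x hx hx1 y hy => ?_⟩
  · obtain ⟨a, b, hab, hcol0⟩ := h.first
    obtain rfl : x = 0 := by
      have := h.nonempty_iff.1 hx
      by_contra hne
      have := hleft 0 (by omega) ▸ (h.nonempty_iff.2 ⟨le_rfl, by linarith [h.one_le]⟩)
      simp at this
    rw [hcol0, numComponents_Icc hab]
  · obtain ⟨z, hz, hcomp, hzs⟩ :=
      h.touches x (h.nonempty_iff.1 hx).1 (h.nonempty_iff.1 hx1).2 y hy
    refine ⟨z, hz, hcomp, ?_⟩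
    rcases hzs with hzs | hzs
    · exact ⟨z, hzs, hexAdj_succ_iff.2 (Or.inl rfl)⟩
    · exact ⟨z - 1, hzs, hexAdj_succ_iff.2 (Or.inr (by ring))⟩

lemma isCheesy : IsCheesy 1 P := by
  refine ⟨h.isPolyomino, h.rightwardSemiDirected, fun x => ?_⟩
  by_cases hx : 0 ≤ x ∧ x < w
  · rcases h.levelOne x hx.1 hx.2 with ⟨a, b, hab, heq⟩ | ⟨a, g, b, hag, hgb, heq⟩
    · simp [heq, numComponents_Icc hab]
    · simp [heq, numComponents_Icc_sdiff hag hgb, gapSize, gapCells_Icc_sdiff hag hgb]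
  · simp [h.eq_empty x (by omega), numComponents]

end CheesyColumns

lemma columnYs_nonempty_of_isPolyomino {P : Finset Cell} (hP : IsPolyomino P) {c : Cell}
    (hc : c ∈ P) {x : ℤ} (h0 : c.1 ≤ x) (hx : x ≤ maxX P) : (columnYs P x).Nonempty := by
  obtain ⟨d, hd, hdx⟩ := exists_fst_eq_maxX hP.1
  obtain ⟨e, he, hex⟩ := exists_mem_eq_of_reflTransGen Prod.fst
    (fun u v huv => by have := hexAdj_iff.1 huv; omega) hc (hP.2 c hc d hd)
    (z := x) (by omega) (by omega)
  exact ⟨e.2, mem_columnYs.2 (by rw [← hex]; exact he)⟩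

lemma cheesyColumns_of_isCheesy {P : Finset Cell} (h : IsCheesy 1 P) (hn : Normalized P) :
    CheesyColumns (columnYs P) (maxX P + 1) := by
  obtain ⟨hpoly, ⟨hleft, hconn⟩, hcols⟩ := h
  obtain ⟨c₀, hc₀, hc₀x⟩ := hn.2.1
  have hmax := maxX_nonneg hn
  have heq_empty : ∀ x, (x < 0 ∨ maxX P + 1 ≤ x) → columnYs P x = ∅ := fun x hx =>
    eq_empty_of_forall_notMem fun y hy => by
      have := (hn.1 _ (mem_columnYs.1 hy)).1
      have := le_maxX (mem_columnYs.1 hy)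
      dsimp only at *; omega
  have hne : ∀ x, 0 ≤ x → x < maxX P + 1 → (columnYs P x).Nonempty := fun x h0 hx =>
    columnYs_nonempty_of_isPolyomino hpoly hc₀ (by omega) (by omega)
  have hlevel : ∀ x, 0 ≤ x → x < maxX P + 1 → IsLevelOneCol (columnYs P x) := fun x h0 hx =>
    isLevelOneCol_of_numComponents (hne x h0 hx) (hcols x).1 (hcols x).2
  refine ⟨by omega, heq_empty, ?_, hlevel, fun x h0 hx y hy => ?_⟩
  · have h1 := hleft 0 (hne 0 le_rfl (by omega)) fun x' hx' => heq_empty x' (Or.inl hx')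
    rcases hlevel 0 le_rfl (by omega) with h | ⟨a, g, b, hag, hgb, heq⟩
    · exact h
    · rw [heq, numComponents_Icc_sdiff hag hgb] at h1; omega
  · obtain ⟨z, hz, hcomp, c, hc, hadj⟩ :=
      hconn x (hne x h0 (by omega)) (hne (x + 1) (by omega) hx) y hy
    refine ⟨z, hz, hcomp, ?_⟩
    rcases hexAdj_succ_iff.1 hadj with rfl | rfl
    · exact Or.inl hc
    · exact Or.inr (by simpa using hc)

lemma isLevelOneCol_lastCol {Q : Finset Cell} (hQ : IsCheesy 1 Q) (hQn : Normalized Q) :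
    IsLevelOneCol (lastCol Q) :=
  (cheesyColumns_of_isCheesy hQ hQn).levelOne _ (maxX_nonneg hQn) (by omega)

lemma sub_lt_card_of_isPolyomino {P : Finset Cell} (hP : IsPolyomino P) (f : Cell → ℤ)
    (hf : ∀ u v, HexAdj u v → f v - f u ≤ 1 ∧ f u - f v ≤ 1) {c d : Cell} (hc : c ∈ P)
    (hd : d ∈ P) : f d - f c < P.card := by
  have hsub : Icc (f c) (f d) ⊆ P.image f := fun z hz => by
    rw [mem_Icc] at hz
    obtain ⟨e, he, rfl⟩ := exists_mem_eq_of_reflTransGen f hf hc (hP.2 c hc d hd)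
      (z := z) (by omega) (by omega)
    exact mem_image_of_mem f he
  have := (card_le_card hsub).trans card_image_le
  rw [Int.card_Icc] at this
  omega

lemma subset_grid {P : Finset Cell} (hP : IsPolyomino P) (hn : Normalized P) :
    P ⊆ Icc 0 ((P.card : ℤ) - 1) ×ˢ Icc 0 ((P.card : ℤ) - 1) := by
  intro c hc
  obtain ⟨c₁, hc₁, hx⟩ := hn.2.1
  obtain ⟨c₂, hc₂, hy⟩ := hn.2.2
  have h₁ := sub_lt_card_of_isPolyomino hP Prod.fst
    (fun u v huv => by have := hexAdj_iff.1 huv; omega) hc₁ hc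
  have h₂ := sub_lt_card_of_isPolyomino hP Prod.snd
    (fun u v huv => by have := hexAdj_iff.1 huv; omega) hc₂ hc
  simp only [mem_product, mem_Icc]
  have := hn.1 c hc
  omega

open scoped Classical in
def cheesySet (n : ℕ) : Finset (Finset Cell) :=
  ((Icc 0 ((n : ℤ) - 1) ×ˢ Icc 0 ((n : ℤ) - 1)).powerset).filter
    fun P => IsCheesy 1 P ∧ Normalized P ∧ P.card = n

open scoped Classical in
lemma mem_cheesySet {n : ℕ} {P : Finset Cell} :
    P ∈ cheesySet n ↔ IsCheesy 1 P ∧ Normalized P ∧ P.card = n := by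
  rw [cheesySet, mem_filter, mem_powerset, and_iff_right_iff_imp]
  rintro ⟨hP, hn, rfl⟩
  exact subset_grid hP.1 hn

lemma cheesyCount_one_eq_card (n : ℕ) : cheesyCount 1 n = (cheesySet n).card :=
  Nat.subtype_card _ fun _ => mem_cheesySet

def colHeight (s : Finset ℤ) : ℤ := maxD s - minD s + 1

/-- The code `(y, 0)` stands for the interval of `κ` cells starting at `y`, the code `(g, i)`
with `1 ≤ i` for the `κ` cells around the gap `g` with `i` of them below it. -/
def placeCol (κ : ℕ) (p : ℤ × ℕ) : Finset ℤ :=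
  if p.2 = 0 then Icc p.1 (p.1 + κ - 1) else Icc (p.1 - p.2) (p.1 - p.2 + κ) \ {p.1}

def colCode (s : Finset ℤ) : ℤ × ℕ :=
  if (gapCells s).Nonempty then (minD (gapCells s), (minD (gapCells s) - minD s).toNat)
  else (minD s, 0)

/-- The codes of the columns of `κ` cells that can follow the column `s`. -/
def placements (s : Finset ℤ) (κ : ℕ) : Finset (ℤ × ℕ) :=
  Icc (minD s + 1 - κ) (maxD s + 1) ×ˢ {0} ∪ Icc (minD s + 1) (maxD s) ×ˢ Icc 1 (κ - 1)

section Placements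

variable {s : Finset ℤ} {κ : ℕ} {p : ℤ × ℕ}

lemma mem_placements : p ∈ placements s κ ↔
    (p.2 = 0 ∧ minD s + 1 - κ ≤ p.1 ∧ p.1 ≤ maxD s + 1) ∨
    (1 ≤ p.2 ∧ p.2 ≤ κ - 1 ∧ minD s + 1 ≤ p.1 ∧ p.1 ≤ maxD s) := by
  simp only [placements, mem_union, mem_product, mem_Icc, mem_singleton]
  tauto

lemma snd_le_of_mem_placements (hp : p ∈ placements s κ) : p.2 ≤ κ - 1 := by
  rw [mem_placements] at hp; omega

lemma placeCol_of_eq_zero (h : p.2 = 0) : placeCol κ p = Icc p.1 (p.1 + κ - 1) := if_pos h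

lemma placeCol_of_ne_zero (h : p.2 ≠ 0) :
    placeCol κ p = Icc (p.1 - p.2) (p.1 - p.2 + κ) \ {p.1} := if_neg h

variable (hκ : 1 ≤ κ) (hp : p.2 ≤ κ - 1)
include hκ hp

lemma card_placeCol : (placeCol κ p).card = κ := by
  by_cases h : p.2 = 0
  · rw [placeCol_of_eq_zero h, Int.card_Icc]; omega
  · rw [placeCol_of_ne_zero h, card_Icc_sdiff (by omega) (by omega)]; omega

lemma isLevelOneCol_placeCol : IsLevelOneCol (placeCol κ p) := by
  by_cases h : p.2 = 0
  · exact Or.inl ⟨_, _, by omega, placeCol_of_eq_zero h⟩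
  · exact Or.inr ⟨_, _, _, by omega, by omega, placeCol_of_ne_zero h⟩

lemma colHeight_placeCol : colHeight (placeCol κ p) = κ + if p.2 = 0 then 0 else 1 := by
  rw [colHeight]
  split_ifs with h
  · rw [placeCol_of_eq_zero h, minD_Icc (by omega), maxD_Icc (by omega)]; ring
  · rw [placeCol_of_ne_zero h, minD_Icc_sdiff (by omega) (by omega),
      maxD_Icc_sdiff (by omega) (by omega)]; ring

lemma colCode_placeCol : colCode (placeCol κ p) = p := by
  by_cases h : p.2 = 0
  · rw [placeCol_of_eq_zero h, colCode, gapCells_Icc (by omega), if_neg (by simp),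
      minD_Icc (by omega)]
    exact Prod.ext rfl h.symm
  · rw [placeCol_of_ne_zero h, colCode, gapCells_Icc_sdiff (by omega) (by omega),
      if_pos (by simp), minD_singleton, minD_Icc_sdiff (by omega) (by omega)]
    exact Prod.ext rfl (by dsimp only; omega)

end Placements

lemma touches_placeCol {s : Finset ℤ} {κ : ℕ} {p : ℤ × ℕ} (hs : IsLevelOneCol s)
    (hκ : 1 ≤ κ) (hp : p ∈ placements s κ) : Touches s (placeCol κ p) := by
  rcases mem_placements.1 hp with ⟨h0, h1, h2⟩ | ⟨h0, h1, h2, h3⟩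
  · rw [placeCol_of_eq_zero h0, touches_Icc_iff hs (by omega)]; omega
  · rw [placeCol_of_ne_zero (by omega), touches_Icc_sdiff_iff hs (by omega) (by omega)]; omega

lemma placeCol_nonempty {s : Finset ℤ} {κ : ℕ} (hκ : 1 ≤ κ) {p : ℤ × ℕ}
    (hp : p ∈ placements s κ) : (placeCol κ p).Nonempty := by
  rw [← card_pos, card_placeCol hκ (snd_le_of_mem_placements hp)]; omega

lemma placeCol_colCode {t : Finset ℤ} (ht : IsLevelOneCol t) :
    placeCol t.card (colCode t) = t := by
  rcases ht with ⟨a, b, hab, rfl⟩ | ⟨a, g, b, hag, hgb, rfl⟩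
  · rw [colCode, gapCells_Icc hab, if_neg (by simp), minD_Icc hab,
      placeCol_of_eq_zero rfl, Int.card_Icc]
    congr 1; omega
  · rw [colCode, gapCells_Icc_sdiff hag hgb, if_pos (by simp), minD_singleton,
      minD_Icc_sdiff hag hgb, placeCol_of_ne_zero (by dsimp only; omega), card_Icc_sdiff hag hgb]
    dsimp only
    congr 2 <;> omega

lemma colCode_mem_placements {s t : Finset ℤ} (hs : IsLevelOneCol s) (ht : IsLevelOneCol t)
    (h : Touches s t) : colCode t ∈ placements s t.card := by
  rw [mem_placements]
  rcases ht with ⟨a, b, hab, rfl⟩ | ⟨a, g, b, hag, hgb, rfl⟩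
  · rw [touches_Icc_iff hs hab] at h
    rw [colCode, gapCells_Icc hab, if_neg (by simp), minD_Icc hab, Int.card_Icc]
    omega
  · rw [touches_Icc_sdiff_iff hs hag hgb] at h
    rw [colCode, gapCells_Icc_sdiff hag hgb, if_pos (by simp), minD_singleton,
      minD_Icc_sdiff hag hgb, card_Icc_sdiff hag hgb]
    omega

lemma disjoint_placements (s : Finset ℤ) (κ : ℕ) :
    Disjoint (Icc (minD s + 1 - κ) (maxD s + 1) ×ˢ ({0} : Finset ℕ))
      (Icc (minD s + 1) (maxD s) ×ˢ Icc 1 (κ - 1)) := by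
  rw [disjoint_left]
  intro p hp1 hp2
  simp only [mem_product, mem_Icc, mem_singleton] at hp1 hp2
  omega

lemma card_placements {s : Finset ℤ} (hs : s.Nonempty) {κ : ℕ} (hκ : 1 ≤ κ) :
    ((placements s κ).card : ℤ) = κ * colHeight s + 1 := by
  have := minD_le_maxD hs
  rw [placements, card_union_of_disjoint (disjoint_placements s κ), card_product, card_product,
    Int.card_Icc, Int.card_Icc, Nat.card_Icc, card_singleton, colHeight]
  push_cast
  rw [Int.toNat_of_nonneg (by omega), Int.toNat_of_nonneg (by omega), Nat.cast_sub hκ]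
  ring

/-- The `κ + h` intervals placed after a column `s` of height `h` have height `κ`, the
`(κ - 1)(h - 1)` slit columns have height `κ + 1`. -/
lemma sum_colHeight_placeCol {s : Finset ℤ} (hs : s.Nonempty) {κ : ℕ} (hκ : 1 ≤ κ) :
    ∑ p ∈ placements s κ, colHeight (placeCol κ p) =
      ((κ : ℤ) ^ 2 + κ - 1) * colHeight s + 1 := by
  have := minD_le_maxD hs
  have hA : ∀ p ∈ Icc (minD s + 1 - κ) (maxD s + 1) ×ˢ {0},
      colHeight (placeCol κ p) = κ := fun p hp => by
    simp only [mem_product, mem_singleton] at hp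
    rw [colHeight_placeCol hκ (by omega), if_pos hp.2, add_zero]
  have hB : ∀ p ∈ Icc (minD s + 1) (maxD s) ×ˢ Icc 1 (κ - 1),
      colHeight (placeCol κ p) = κ + 1 := fun p hp => by
    simp only [mem_product, mem_Icc] at hp
    rw [colHeight_placeCol hκ (by omega), if_neg (by omega)]
  rw [placements, sum_union (disjoint_placements s κ), sum_congr rfl hA, sum_congr rfl hB]
  rw [sum_const, sum_const, card_product, card_product, Int.card_Icc, Int.card_Icc,
    Nat.card_Icc, card_singleton, colHeight]
  simp only [nsmul_eq_mul]
  push_cast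
  rw [Int.toNat_of_nonneg (by omega), Int.toNat_of_nonneg (by omega), Nat.cast_sub hκ]
  ring

def shiftY (t : ℤ) (P : Finset Cell) : Finset Cell := P.image fun c => (c.1, c.2 + t)

def minY (P : Finset Cell) : ℤ := minD (P.image Prod.snd)

section ShiftY

variable {P : Finset Cell} {t : ℤ}

lemma mem_shiftY {c : Cell} : c ∈ shiftY t P ↔ (c.1, c.2 - t) ∈ P := by
  simp only [shiftY, mem_image]
  exact ⟨by rintro ⟨d, hd, rfl⟩; simpa using hd, fun h => ⟨_, h, by simp⟩⟩

lemma columnYs_shiftY (x : ℤ) : columnYs (shiftY t P) x = (columnYs P x).image (· + t) := by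
  ext y; rw [mem_columnYs, mem_shiftY, mem_image_add, mem_columnYs]

lemma card_shiftY : (shiftY t P).card = P.card :=
  card_image_of_injective _ fun c d h => by
    simp only [Prod.mk.injEq, add_left_inj] at h; exact Prod.ext h.1 h.2

lemma shiftY_shiftY (u : ℤ) : shiftY t (shiftY u P) = shiftY (u + t) P := by
  ext c; simp only [mem_shiftY, sub_sub, add_comm t]

lemma shiftY_zero : shiftY 0 P = P := by ext c; simp [mem_shiftY]

lemma shiftY_union (R : Finset Cell) : shiftY t (P ∪ R) = shiftY t P ∪ shiftY t R :=
  image_union _ _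

lemma maxX_shiftY : maxX (shiftY t P) = maxX P := by
  simp only [maxX, shiftY, image_image]; rfl

lemma minY_shiftY (h : P.Nonempty) : minY (shiftY t P) = minY P + t := by
  rw [minY, minY, ← minD_image_add (h.image _), shiftY, image_image, image_image]; rfl

lemma minY_le {c : Cell} (hc : c ∈ P) : minY P ≤ c.2 := minD_le (mem_image_of_mem _ hc)

lemma exists_snd_eq_minY (h : P.Nonempty) : ∃ c ∈ P, c.2 = minY P := by
  obtain ⟨c, hc, hcy⟩ := mem_image.1 (minD_mem (h.image Prod.snd))
  exact ⟨c, hc, hcy⟩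

lemma minY_eq_zero (hn : Normalized P) : minY P = 0 := by
  obtain ⟨c, hc, hcy⟩ := hn.2.2
  obtain ⟨d, hd, hdy⟩ := exists_snd_eq_minY ⟨c, hc⟩
  have := minY_le hc
  have := (hn.1 d hd).2
  omega

lemma image_image_add_vline (s : Finset ℤ) (v : ℤ) :
    (s.image (· + t)).image (fun y => (v, y)) = shiftY t (s.image fun y => (v, y)) := by
  simp only [shiftY, image_image, Function.comp_def]

lemma CheesyColumns.shiftY {w : ℤ} (h : CheesyColumns (columnYs P) w) :
    CheesyColumns (columnYs (shiftY t P)) w := by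
  refine ⟨h.one_le, fun x hx => ?_, ?_, fun x h0 hx => ?_, fun x h0 hx => ?_⟩ <;>
    simp only [columnYs_shiftY]
  · simp [h.eq_empty x hx]
  · exact h.first.image_add
  · exact (h.levelOne x h0 hx).image_add
  · exact (h.touches x h0 hx).image_add t

end ShiftY

/-- The polyomino `Q` with the column of code `p` appended on its right; the shift keeps it
normalized when the new column reaches below the abscissa axis. -/
def attachCol (Q : Finset Cell) (κ : ℕ) (p : ℤ × ℕ) : Finset Cell :=
  shiftY (max 0 (-minD (placeCol κ p))) (Q ∪ (placeCol κ p).image fun y => (maxX Q + 1, y))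

lemma mem_attachCol {Q : Finset Cell} {κ : ℕ} {p : ℤ × ℕ} {c : Cell} :
    c ∈ attachCol Q κ p ↔
    (c.1, c.2 - max 0 (-minD (placeCol κ p))) ∈ Q ∨
      (c.1 = maxX Q + 1 ∧ c.2 - max 0 (-minD (placeCol κ p)) ∈ placeCol κ p) := by
  rw [attachCol, mem_shiftY, mem_union, mem_image]
  simp only [Prod.mk.injEq]
  constructor
  · rintro (h | ⟨y, hy, h1, rfl⟩)
    exacts [Or.inl h, Or.inr ⟨h1.symm, hy⟩]
  · rintro (h | ⟨h1, hy⟩)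
    exacts [Or.inl h, Or.inr ⟨_, hy, h1.symm, rfl⟩]

lemma columnYs_attachCol (Q : Finset Cell) (κ : ℕ) (p : ℤ × ℕ) (x : ℤ) :
    columnYs (attachCol Q κ p) x =
      (if x = maxX Q + 1 then placeCol κ p else columnYs Q x).image
        (· + max 0 (-minD (placeCol κ p))) := by
  rw [attachCol, columnYs_shiftY, columnYs_union, columnYs_vline]
  split_ifs with hx
  · rw [hx, columnYs_maxX_add_one, empty_union]
  · rw [union_empty]

section Attach

variable {Q : Finset Cell} {κ : ℕ} {p : ℤ × ℕ} (hκ : 1 ≤ κ)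
  (hp : p ∈ placements (lastCol Q) κ)
include hκ hp

lemma card_attachCol : (attachCol Q κ p).card = Q.card + κ := by
  rw [attachCol, card_shiftY, card_union_of_disjoint, card_vline,
    card_placeCol hκ (snd_le_of_mem_placements hp)]
  rw [disjoint_left]
  rintro c hc hc'
  obtain ⟨y, -, rfl⟩ := mem_image.1 hc'
  have := le_maxX hc
  dsimp only at this
  omega

lemma maxX_attachCol : maxX (attachCol Q κ p) = maxX Q + 1 := by
  obtain ⟨y, hy⟩ := placeCol_nonempty hκ hp
  have hmem : (maxX Q + 1, y + max 0 (-minD (placeCol κ p))) ∈ attachCol Q κ p :=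
    mem_attachCol.2 (Or.inr ⟨rfl, by simpa using hy⟩)
  refine maxX_eq_of_mem hmem fun d hd => ?_
  rcases mem_attachCol.1 hd with h | ⟨h, -⟩
  · exact (le_maxX h).trans (by omega)
  · exact h.le

lemma lastCol_attachCol :
    lastCol (attachCol Q κ p) = (placeCol κ p).image (· + max 0 (-minD (placeCol κ p))) := by
  rw [lastCol, maxX_attachCol hκ hp, columnYs_attachCol, if_pos rfl]

lemma card_lastCol_attachCol : (lastCol (attachCol Q κ p)).card = κ := by
  rw [lastCol_attachCol hκ hp, card_image_of_injective _ (add_left_injective _),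
    card_placeCol hκ (snd_le_of_mem_placements hp)]

lemma colHeight_lastCol_attachCol :
    colHeight (lastCol (attachCol Q κ p)) = colHeight (placeCol κ p) := by
  have hne := placeCol_nonempty hκ hp
  rw [lastCol_attachCol hκ hp, colHeight, maxD_image_add hne, minD_image_add hne, colHeight]
  ring

lemma normalized_attachCol (hQn : Normalized Q) : Normalized (attachCol Q κ p) := by
  set t := max 0 (-minD (placeCol κ p))
  refine ⟨fun c hc => ?_, ?_, ?_⟩
  · rcases mem_attachCol.1 hc with h | ⟨h1, hy⟩
    · have := hQn.1 _ h; dsimp only at this; omega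
    · have := minD_le hy; have := maxX_nonneg hQn; omega
  · obtain ⟨c, hc, hcx⟩ := hQn.2.1
    exact ⟨(c.1, c.2 + t), mem_attachCol.2 (Or.inl (by simpa [t] using hc)), hcx⟩
  · by_cases hneg : minD (placeCol κ p) < 0
    · refine ⟨(maxX Q + 1, minD (placeCol κ p) + t), mem_attachCol.2
        (Or.inr ⟨rfl, by simpa [t] using minD_mem (placeCol_nonempty hκ hp)⟩), by omega⟩
    · obtain ⟨c, hc, hcy⟩ := hQn.2.2
      exact ⟨(c.1, c.2 + t), mem_attachCol.2 (Or.inl (by simpa [t] using hc)),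
        by dsimp only; omega⟩

lemma cheesyColumns_attachCol (hQ : IsCheesy 1 Q) (hQn : Normalized Q) :
    CheesyColumns (columnYs (attachCol Q κ p)) (maxX Q + 2) := by
  have hQc := cheesyColumns_of_isCheesy hQ hQn
  have hM := maxX_nonneg hQn
  refine ⟨by omega, fun x hx => ?_, ?_, fun x h0 hx => ?_, fun x h0 hx => ?_⟩ <;>
    simp only [columnYs_attachCol]
  · rw [if_neg (by omega), hQc.eq_empty x (by omega), image_empty]
  · rw [if_neg (by omega)]; exact hQc.first.image_add
  · split_ifs with hxM
    · exact (isLevelOneCol_placeCol hκ (snd_le_of_mem_placements hp)).image_add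
    · exact (hQc.levelOne x h0 (by omega)).image_add
  · by_cases hxM : x + 1 = maxX Q + 1
    · rw [if_pos hxM, if_neg (by omega)]
      obtain rfl : x = maxX Q := by omega
      exact (touches_placeCol (isLevelOneCol_lastCol hQ hQn) hκ hp).image_add _
    · rw [if_neg hxM, if_neg (by omega)]
      exact (hQc.touches x h0 (by omega)).image_add _

end Attach

def dropLast (P : Finset Cell) : Finset Cell := P.filter (·.1 ≠ maxX P)

def stem (P : Finset Cell) : Finset Cell := shiftY (-minY (dropLast P)) (dropLast P)

def lastCode (P : Finset Cell) : ℤ × ℕ := colCode ((lastCol P).image (· + -minY (dropLast P)))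

lemma mem_dropLast {P : Finset Cell} {c : Cell} : c ∈ dropLast P ↔ c ∈ P ∧ c.1 ≠ maxX P :=
  mem_filter

lemma columnYs_dropLast (P : Finset Cell) (x : ℤ) :
    columnYs (dropLast P) x = if x = maxX P then ∅ else columnYs P x := by
  ext y
  simp only [mem_columnYs, dropLast, mem_filter]
  split_ifs with h <;> simp [h, mem_columnYs]

lemma dropLast_union_lastCol (P : Finset Cell) :
    dropLast P ∪ (lastCol P).image (fun y => (maxX P, y)) = P := by
  ext c
  simp only [dropLast, lastCol, mem_union, mem_filter, mem_image, mem_columnYs]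
  constructor
  · rintro (⟨hc, -⟩ | ⟨y, hy, rfl⟩) <;> assumption
  · intro hc
    by_cases hx : c.1 = maxX P
    · exact Or.inr ⟨c.2, by rw [← hx]; exact hc, Prod.ext hx.symm rfl⟩
    · exact Or.inl ⟨hc, hx⟩

lemma card_dropLast_add (P : Finset Cell) : (dropLast P).card + (lastCol P).card = P.card := by
  conv_rhs => rw [← dropLast_union_lastCol P]
  rw [card_union_of_disjoint, card_vline]
  rw [disjoint_left]
  rintro c hc hc'
  obtain ⟨y, -, rfl⟩ := mem_image.1 hc'
  exact (mem_filter.1 hc).2 rfl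

lemma card_stem_add (P : Finset Cell) : (stem P).card + (lastCol P).card = P.card := by
  rw [stem, card_shiftY, card_dropLast_add]

section Decompose

variable {P : Finset Cell} (hP : IsCheesy 1 P) (hPn : Normalized P)
include hP hPn

lemma placeCol_lastCode : placeCol (lastCol P).card (lastCode P) =
    (lastCol P).image (· + -minY (dropLast P)) := by
  rw [← card_image_of_injective (lastCol P) (add_left_injective (-minY (dropLast P))), lastCode,
    placeCol_colCode (isLevelOneCol_lastCol hP hPn).image_add]

variable (hmax : 1 ≤ maxX P)
include hmax

lemma cheesyColumns_dropLast : CheesyColumns (columnYs (dropLast P)) (maxX P) := by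
  have hc := cheesyColumns_of_isCheesy hP hPn
  refine ⟨hmax, fun x hx => ?_, ?_, fun x h0 hx => ?_, fun x h0 hx => ?_⟩ <;>
    simp only [columnYs_dropLast]
  · split_ifs; exacts [rfl, hc.eq_empty x (by omega)]
  · rw [if_neg (by omega)]; exact hc.first
  · rw [if_neg (by omega)]; exact hc.levelOne x h0 (by omega)
  · rw [if_neg (by omega), if_neg (by omega)]; exact hc.touches x h0 (by omega)

lemma dropLast_nonempty : (dropLast P).Nonempty := by
  obtain ⟨y, hy⟩ :=
    ((cheesyColumns_dropLast hP hPn hmax).nonempty_iff (x := 0)).2 ⟨le_rfl, hmax⟩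
  exact ⟨_, mem_columnYs.1 hy⟩

lemma minY_dropLast_nonneg : 0 ≤ minY (dropLast P) := by
  obtain ⟨c, hc, hcy⟩ := exists_snd_eq_minY (dropLast_nonempty hP hPn hmax)
  have := (hPn.1 c (mem_filter.1 hc).1).2
  omega

lemma isCheesy_stem : IsCheesy 1 (stem P) :=
  (cheesyColumns_dropLast hP hPn hmax).shiftY.isCheesy

lemma maxX_stem : maxX (stem P) = maxX P - 1 := by
  obtain ⟨y, hy⟩ := ((cheesyColumns_dropLast hP hPn hmax).nonempty_iff (x := maxX P - 1)).2
    ⟨by omega, by omega⟩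
  rw [stem, maxX_shiftY]
  refine maxX_eq_of_mem (mem_columnYs.1 hy) fun d hd => ?_
  have := le_maxX (mem_filter.1 hd).1
  have := (mem_filter.1 hd).2
  dsimp only
  omega

lemma normalized_stem : Normalized (stem P) := by
  have hc := (cheesyColumns_dropLast hP hPn hmax).shiftY (t := -minY (dropLast P))
  refine ⟨fun c hc' => ⟨(hc.fst_mem_Ico hc').1, ?_⟩, ?_, ?_⟩
  · have := minY_le (mem_shiftY.1 hc')
    dsimp only at this
    omega
  · obtain ⟨y, hy⟩ := (hc.nonempty_iff (x := 0)).2 ⟨le_rfl, hmax⟩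
    exact ⟨_, mem_columnYs.1 hy, rfl⟩
  · obtain ⟨c, hc', hcy⟩ := exists_snd_eq_minY (dropLast_nonempty hP hPn hmax)
    exact ⟨(c.1, c.2 - minY (dropLast P)), mem_shiftY.2 (by simpa using hc'), by
      dsimp only; omega⟩

lemma lastCol_stem :
    lastCol (stem P) = (columnYs P (maxX P - 1)).image (· + -minY (dropLast P)) := by
  rw [lastCol, maxX_stem hP hPn hmax, stem, columnYs_shiftY, columnYs_dropLast, if_neg (by omega)]

lemma lastCode_mem_placements :
    lastCode P ∈ placements (lastCol (stem P)) (lastCol P).card := by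
  have hc := cheesyColumns_of_isCheesy hP hPn
  have htouch := hc.touches (maxX P - 1) (by omega) (by omega)
  rw [sub_add_cancel] at htouch
  rw [← card_image_of_injective (lastCol P) (add_left_injective (-minY (dropLast P))),
    lastCode, lastCol_stem hP hPn hmax]
  exact colCode_mem_placements (hc.levelOne _ (by omega) (by omega)).image_add
    (isLevelOneCol_lastCol hP hPn).image_add (htouch.image_add _)

/-- The cell of ordinate `0` lies either in the last column or before it, so the shift that
`attachCol` applies is exactly the one that `stem` undid. -/
lemma attachCol_stem : attachCol (stem P) (lastCol P).card (lastCode P) = P := by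
  have hne : (lastCol P).Nonempty := ((cheesyColumns_of_isCheesy hP hPn).nonempty_iff).2
    ⟨by omega, by omega⟩
  have hshift : max 0 (-minD (placeCol (lastCol P).card (lastCode P))) = minY (dropLast P) := by
    rw [placeCol_lastCode hP hPn, minD_image_add hne]
    have h0 := minY_dropLast_nonneg hP hPn hmax
    have h1 : 0 ≤ minD (lastCol P) := (hPn.1 _ (mem_columnYs.1 (minD_mem hne))).2
    obtain ⟨c, hc, hcy⟩ := hPn.2.2
    by_cases hx : c.1 = maxX P
    · have := minD_le (s := lastCol P) (mem_columnYs.2 (by rw [← hx]; exact hc))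
      omega
    · have := minY_le (mem_dropLast.2 ⟨hc, hx⟩)
      omega
  rw [attachCol, hshift, placeCol_lastCode hP hPn, maxX_stem hP hPn hmax, sub_add_cancel,
    stem]
  rw [image_image_add_vline, ← shiftY_union, shiftY_shiftY, neg_add_cancel, shiftY_zero,
    dropLast_union_lastCol]

end Decompose

section AttachDecompose

variable {Q : Finset Cell} (hQn : Normalized Q) {κ : ℕ} {p : ℤ × ℕ} (hκ : 1 ≤ κ)
  (hp : p ∈ placements (lastCol Q) κ)
include hκ hp

lemma dropLast_attachCol :
    dropLast (attachCol Q κ p) = shiftY (max 0 (-minD (placeCol κ p))) Q := by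
  ext c
  rw [mem_dropLast, mem_attachCol, maxX_attachCol hκ hp, mem_shiftY]
  constructor
  · rintro ⟨h | ⟨h, -⟩, hc⟩
    exacts [h, absurd h hc]
  · intro h
    have := le_maxX h
    exact ⟨Or.inl h, by dsimp only at this; omega⟩

include hQn

lemma minY_dropLast_attachCol :
    minY (dropLast (attachCol Q κ p)) = max 0 (-minD (placeCol κ p)) := by
  obtain ⟨c, hc, -⟩ := hQn.2.1
  rw [dropLast_attachCol hκ hp, minY_shiftY ⟨c, hc⟩, minY_eq_zero hQn, zero_add]

lemma stem_attachCol : stem (attachCol Q κ p) = Q := by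
  rw [stem, minY_dropLast_attachCol hQn hκ hp, dropLast_attachCol hκ hp, shiftY_shiftY,
    add_neg_cancel, shiftY_zero]

lemma lastCode_attachCol : lastCode (attachCol Q κ p) = p := by
  rw [lastCode, minY_dropLast_attachCol hQn hκ hp, lastCol_attachCol hκ hp,
    image_add_neg_image_add, colCode_placeCol hκ (snd_le_of_mem_placements hp)]

end AttachDecompose

def bar (n : ℕ) : Finset Cell := (Icc 0 ((n : ℤ) - 1)).image fun y => (0, y)

section Bar

variable {n : ℕ}

lemma columnYs_bar (x : ℤ) : columnYs (bar n) x = if x = 0 then Icc 0 ((n : ℤ) - 1) else ∅ :=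
  columnYs_vline _ _ _

lemma mem_bar {c : Cell} : c ∈ bar n ↔ c.1 = 0 ∧ 0 ≤ c.2 ∧ c.2 ≤ n - 1 := by
  rw [← mem_columnYs (P := bar n), columnYs_bar]
  split_ifs with h <;> simp [h]

lemma maxX_bar (hn : 1 ≤ n) : maxX (bar n) = 0 :=
  maxX_eq_of_mem (c := (0, 0)) (mem_bar.2 ⟨rfl, le_rfl, by omega⟩) fun d hd =>
    (mem_bar.1 hd).1.le

lemma bar_mem_cheesySet (hn : 1 ≤ n) : bar n ∈ cheesySet n := by
  have hcols : CheesyColumns (columnYs (bar n)) 1 := by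
    refine ⟨le_rfl, fun x hx => ?_, ?_, fun x h0 hx => ?_, fun x h0 hx => by omega⟩ <;>
      rw [columnYs_bar]
    · rw [if_neg (by omega)]
    · exact ⟨0, _, by omega, if_pos rfl⟩
    · exact Or.inl ⟨0, _, by omega, if_pos (by omega)⟩
  refine mem_cheesySet.2 ⟨hcols.isCheesy, ⟨fun c hc => ?_, ?_, ?_⟩, ?_⟩
  · have := mem_bar.1 hc; omega
  · exact ⟨(0, 0), mem_bar.2 ⟨rfl, le_rfl, by omega⟩, rfl⟩
  · exact ⟨(0, 0), mem_bar.2 ⟨rfl, le_rfl, by omega⟩, rfl⟩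
  · rw [bar, card_vline, Int.card_Icc]; omega

lemma colHeight_lastCol_bar (hn : 1 ≤ n) : colHeight (lastCol (bar n)) = n := by
  rw [lastCol, maxX_bar hn, columnYs_bar, if_pos rfl, colHeight, minD_Icc (by omega),
    maxD_Icc (by omega)]
  ring

lemma eq_bar_of_maxX_eq_zero {P : Finset Cell} (hP : P ∈ cheesySet n) (h : maxX P = 0) :
    P = bar n := by
  obtain ⟨hPc, hPn, hcard⟩ := mem_cheesySet.1 hP
  obtain ⟨a, b, hab, hcol⟩ := (cheesyColumns_of_isCheesy hPc hPn).first
  have hdrop : dropLast P = ∅ := filter_eq_empty_iff.2 fun c hc => by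
    have := le_maxX hc; have := (hPn.1 c hc).1; omega
  have hP' : P = (Icc a b).image fun y => (0, y) := by
    conv_lhs => rw [← dropLast_union_lastCol P]
    rw [hdrop, empty_union, lastCol, h, hcol]
  obtain ⟨c, hc, hcy⟩ := hPn.2.2
  rw [hP'] at hc hPn
  have ha : a = 0 := by
    have h1 := (hPn.1 (0, a) (mem_image_of_mem _ (by simp [hab]))).2
    obtain ⟨y, hy, rfl⟩ := mem_image.1 hc
    simp only [mem_Icc] at hy
    dsimp only at hcy h1
    omega
  have hb : b = n - 1 := by
    have := congrArg card hP'
    rw [card_vline, Int.card_Icc] at this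
    omega
  rw [hP', ha, hb, bar]

end Bar

/-- Every polyomino of area `n` is the bar or arises in exactly one way by attaching a column of
`n - j` cells to a polyomino of smaller area `j`. -/
lemma sum_cheesySet {n : ℕ} (hn : 1 ≤ n) (f : Finset Cell → ℤ) :
    ∑ P ∈ cheesySet n, f P = f (bar n) + ∑ j ∈ Ico 1 n, ∑ Q ∈ cheesySet j,
      ∑ p ∈ placements (lastCol Q) (n - j), f (attachCol Q (n - j) p) := by
  have hbar : (cheesySet n).filter (maxX · = 0) = {bar n} := by
    ext P
    simp only [mem_filter, mem_singleton]
    refine ⟨fun h => eq_bar_of_maxX_eq_zero h.1 h.2, ?_⟩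
    rintro rfl
    exact ⟨bar_mem_cheesySet hn, maxX_bar hn⟩
  rw [← sum_filter_add_sum_filter_not (cheesySet n) (maxX · = 0), hbar, sum_singleton]
  congr 1
  have hsig : ∀ j ∈ Ico 1 n, ∑ Q ∈ cheesySet j,
      ∑ p ∈ placements (lastCol Q) (n - j), f (attachCol Q (n - j) p) =
      ∑ x ∈ (cheesySet j).sigma fun Q => placements (lastCol Q) (n - j),
        f (attachCol x.1 (n - j) x.2) := fun j _ => by rw [sum_sigma']
  rw [sum_congr rfl hsig, sum_sigma']
  symm
  refine sum_bij' (fun x _ => attachCol x.2.1 (n - x.1) x.2.2)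
    (fun P _ => ⟨n - (lastCol P).card, stem P, lastCode P⟩) ?_ ?_ ?_ ?_ (fun _ _ => rfl)
  · rintro ⟨j, Q, p⟩ hx
    obtain ⟨hj, hQ, hp⟩ := by simpa only [mem_sigma, mem_Ico] using hx
    obtain ⟨hQc, hQn, rfl⟩ := mem_cheesySet.1 hQ
    have hκ : 1 ≤ n - Q.card := by omega
    refine mem_filter.2 ⟨mem_cheesySet.2 ⟨(cheesyColumns_attachCol hκ hp hQc hQn).isCheesy,
      normalized_attachCol hκ hp hQn, by rw [card_attachCol hκ hp]; omega⟩, ?_⟩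
    rw [maxX_attachCol hκ hp]
    have := maxX_nonneg hQn
    omega
  · intro P hP
    obtain ⟨hP, hmax⟩ := mem_filter.1 hP
    obtain ⟨hPc, hPn, rfl⟩ := mem_cheesySet.1 hP
    have hmax : 1 ≤ maxX P := by have := maxX_nonneg hPn; omega
    have hstem : 0 < (stem P).card := by
      rw [stem, card_shiftY]; exact card_pos.2 (dropLast_nonempty hPc hPn hmax)
    have hκ := card_stem_add P
    have hlast := card_pos.2 (isLevelOneCol_lastCol hPc hPn).nonempty
    simp only [mem_sigma, mem_Ico]
    refine ⟨⟨by omega, by omega⟩, mem_cheesySet.2 ⟨isCheesy_stem hPc hPn hmax,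
      normalized_stem hPc hPn hmax, by omega⟩, ?_⟩
    rw [show P.card - (P.card - (lastCol P).card) = (lastCol P).card by omega]
    exact lastCode_mem_placements hPc hPn hmax
  · rintro ⟨j, Q, p⟩ hx
    obtain ⟨hj, hQ, hp⟩ := by simpa only [mem_sigma, mem_Ico] using hx
    obtain ⟨hQc, hQn, rfl⟩ := mem_cheesySet.1 hQ
    have hκ : 1 ≤ n - Q.card := by omega
    dsimp only
    rw [card_lastCol_attachCol hκ hp, stem_attachCol hQn hκ hp, lastCode_attachCol hQn hκ hp,
      show n - (n - Q.card) = Q.card by omega]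
  · intro P hP
    obtain ⟨hP, hmax⟩ := mem_filter.1 hP
    obtain ⟨hPc, hPn, rfl⟩ := mem_cheesySet.1 hP
    have hmax : 1 ≤ maxX P := by have := maxX_nonneg hPn; omega
    have hκ := card_stem_add P
    dsimp only
    rw [show P.card - (P.card - (lastCol P).card) = (lastCol P).card by omega]
    exact attachCol_stem hPc hPn hmax

def areaCount (n : ℕ) : ℤ := (cheesySet n).card

def lastHeightSum (n : ℕ) : ℤ := ∑ P ∈ cheesySet n, colHeight (lastCol P)

def wsum (k : ℕ) (f : ℕ → ℤ) (n : ℕ) : ℤ := ∑ j ∈ Ico 1 n, ((n : ℤ) - j) ^ k * f j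

lemma areaCount_eq {n : ℕ} (hn : 1 ≤ n) :
    areaCount n = 1 + wsum 1 lastHeightSum n + wsum 0 areaCount n := by
  rw [areaCount, card_eq_sum_ones, Nat.cast_sum, Nat.cast_one, sum_cheesySet hn, add_assoc,
    wsum, wsum, ← sum_add_distrib]
  refine congrArg _ (sum_congr rfl fun j hj => ?_)
  have hκ : 1 ≤ n - j := by rw [mem_Ico] at hj; omega
  rw [lastHeightSum, areaCount, pow_one, pow_zero, one_mul, mul_sum, card_eq_sum_ones,
    Nat.cast_sum, ← sum_add_distrib]
  refine sum_congr rfl fun Q hQ => ?_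
  obtain ⟨hQc, hQn, -⟩ := mem_cheesySet.1 hQ
  rw [← Nat.cast_one, ← Nat.cast_sum, ← card_eq_sum_ones,
    card_placements (isLevelOneCol_lastCol hQc hQn).nonempty hκ,
    Nat.cast_sub (by rw [mem_Ico] at hj; omega), Nat.cast_one]

lemma lastHeightSum_eq {n : ℕ} (hn : 1 ≤ n) :
    lastHeightSum n = n + wsum 2 lastHeightSum n + wsum 1 lastHeightSum n -
      wsum 0 lastHeightSum n + wsum 0 areaCount n := by
  have hsum : wsum 2 lastHeightSum n + wsum 1 lastHeightSum n - wsum 0 lastHeightSum n +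
      wsum 0 areaCount n = ∑ j ∈ Ico 1 n,
        ((((n : ℤ) - j) ^ 2 + (n - j) - 1) * lastHeightSum j + areaCount j) := by
    simp only [wsum, ← sum_add_distrib, ← sum_sub_distrib]
    exact sum_congr rfl fun j _ => by ring
  suffices lastHeightSum n = n + ∑ j ∈ Ico 1 n,
      ((((n : ℤ) - j) ^ 2 + (n - j) - 1) * lastHeightSum j + areaCount j) by
    rw [this, ← hsum]; ring
  rw [lastHeightSum, sum_cheesySet hn, colHeight_lastCol_bar hn]
  refine congrArg _ (sum_congr rfl fun j hj => ?_)
  have hκ : 1 ≤ n - j := by rw [mem_Ico] at hj; omega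
  rw [lastHeightSum, areaCount, mul_sum, card_eq_sum_ones, Nat.cast_sum, ← sum_add_distrib]
  refine sum_congr rfl fun Q hQ => ?_
  obtain ⟨hQc, hQn, -⟩ := mem_cheesySet.1 hQ
  rw [sum_congr rfl fun p hp => colHeight_lastCol_attachCol hκ hp,
    sum_colHeight_placeCol (isLevelOneCol_lastCol hQc hQn).nonempty hκ,
    Nat.cast_sub (by rw [mem_Ico] at hj; omega), Nat.cast_one]

section WeightedSums

variable (f : ℕ → ℤ) {n : ℕ} (hn : 1 ≤ n)
include hn

lemma wsum_zero_succ : wsum 0 f (n + 1) = wsum 0 f n + f n := by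
  simp only [wsum, pow_zero, one_mul, sum_Ico_succ_top hn]

lemma wsum_one_succ : wsum 1 f (n + 1) = wsum 1 f n + wsum 0 f n + f n := by
  simp only [wsum, sum_Ico_succ_top hn, ← sum_add_distrib]
  push_cast
  congr 1
  · exact sum_congr rfl fun j _ => by ring
  · ring

lemma wsum_two_succ :
    wsum 2 f (n + 1) = wsum 2 f n + 2 * wsum 1 f n + wsum 0 f n + f n := by
  simp only [wsum, sum_Ico_succ_top hn, mul_sum, ← sum_add_distrib]
  push_cast
  congr 1
  · exact sum_congr rfl fun j _ => by ring
  · ring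

end WeightedSums

lemma wsum_one (k : ℕ) (f : ℕ → ℤ) : wsum k f 1 = 0 := by simp [wsum]

section Recurrence

variable {c d : ℕ → ℤ} (hc : ∀ n ≥ 1, c n = 1 + wsum 1 d n + wsum 0 c n)
  (hd : ∀ n ≥ 1, d n = n + wsum 2 d n + wsum 1 d n - wsum 0 d n + wsum 0 c n)

include hc in
lemma c_succ {n : ℕ} (hn : 1 ≤ n) : c (n + 1) = 2 * c n + wsum 0 d n + d n := by
  have := hc (n + 1) (by omega)
  rw [wsum_one_succ d hn, wsum_zero_succ c hn] at this
  linarith [hc n hn]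

include hd in
lemma d_succ {n : ℕ} (hn : 1 ≤ n) :
    d (n + 1) = 2 * d n + 2 * wsum 1 d n + 2 * wsum 0 d n + c n + 1 := by
  have := hd (n + 1) (by omega)
  rw [wsum_two_succ d hn, wsum_one_succ d hn, wsum_zero_succ d hn, wsum_zero_succ c hn] at this
  push_cast at this
  linarith [hd n hn]

include hc in
lemma c_add_two {n : ℕ} (hn : 1 ≤ n) : c (n + 2) = 3 * c (n + 1) - 2 * c n + d (n + 1) := by
  linarith [c_succ hc hn, c_succ hc (n := n + 1) (by omega), wsum_zero_succ d hn]

include hd in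
lemma d_add_three {n : ℕ} (hn : 1 ≤ n) :
    d (n + 3) = 4 * d (n + 2) - d (n + 1) + c (n + 2) - 2 * c (n + 1) + c n := by
  linarith [d_succ hd hn, d_succ hd (n := n + 1) (by omega),
    d_succ hd (n := n + 2) (by omega), wsum_zero_succ d hn,
    wsum_zero_succ d (n := n + 1) (by omega), wsum_one_succ d hn,
    wsum_one_succ d (n := n + 1) (by omega)]

include hc hd in
lemma recurrence_defect_succ {n : ℕ} (hn : 1 ≤ n) :
    c (n + 4) - 6 * c (n + 3) + 8 * c (n + 2) - c (n + 1) =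
      c (n + 3) - 6 * c (n + 2) + 8 * c (n + 1) - c n := by
  linarith [c_add_two hc (n := n + 2) (by omega), c_add_two hc (n := n + 1) (by omega),
    c_add_two hc hn, d_add_three hd hn]

include hc hd in
lemma initial_values : c 1 = 1 ∧ c 2 = 3 ∧ c 3 = 11 ∧ c 4 = 43 := by
  have c1 := hc 1 le_rfl
  have d1 := hd 1 le_rfl
  simp only [wsum_one, Nat.cast_one] at c1 d1
  have c2 := c_succ hc le_rfl
  have d2 := d_succ hd le_rfl
  have c3 := c_add_two hc le_rfl
  have d3 := d_succ hd (n := 2) (by omega)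
  have c4 := c_add_two hc (n := 2) (by omega)
  have w0 := wsum_zero_succ d le_rfl
  have w1 := wsum_one_succ d le_rfl
  simp only [wsum_one] at c2 d2 w0 w1
  norm_num at c2 d2 c3 d3 c4 w0 w1
  refine ⟨by linarith, by linarith, by linarith, by linarith⟩

include hc hd in
lemma recurrence (n : ℕ) : c (n + 4) = 6 * c (n + 3) - 8 * c (n + 2) + c (n + 1) := by
  induction n with
  | zero =>
    obtain ⟨h1, h2, h3, h4⟩ := initial_values hc hd
    norm_num [h1, h2, h3, h4]
  | succ n ih =>
    linarith [recurrence_defect_succ hc hd (n := n + 1) (by omega)]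

end Recurrence

end Cheesy

open Cheesy

/-- Initial values and linear recurrence for the number of level one cheesy polyominoes. -/
theorem stmt_4 :
    cheesyCount 1 1 = 1 ∧ cheesyCount 1 2 = 3 ∧ cheesyCount 1 3 = 11 ∧
    ∀ n : ℕ, 4 ≤ n →
      (cheesyCount 1 n : ℤ) = 6 * (cheesyCount 1 (n-1) : ℤ)
        - 8 * (cheesyCount 1 (n-2) : ℤ) + (cheesyCount 1 (n-3) : ℤ) := by
  have hcount : ∀ n, (cheesyCount 1 n : ℤ) = areaCount n := fun n => by
    rw [cheesyCount_one_eq_card, areaCount]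
  have hc := fun n (hn : n ≥ 1) => areaCount_eq hn
  have hd := fun n (hn : n ≥ 1) => lastHeightSum_eq hn
  obtain ⟨h1, h2, h3, -⟩ := initial_values hc hd
  refine ⟨?_, ?_, ?_, fun n hn => ?_⟩
  · exact_mod_cast (hcount 1).trans h1
  · exact_mod_cast (hcount 2).trans h2
  · exact_mod_cast (hcount 3).trans h3
  · obtain ⟨k, rfl⟩ := Nat.exists_eq_add_of_le' hn
    simp only [hcount, show k + 4 - 1 = k + 3 by omega, show k + 4 - 2 = k + 2 by omega,
      show k + 4 - 3 = k + 1 by omega]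
    exact recurrence hc hd k
end
end

section
/- Let A and B₁ be as follows: A ∈ (ℚ[t])⟦q⟧ has coefficient of qⁿtᵏ equal to the number of column-convex hexagonal-celled polyominoes with area n whose last column has height k, and B₁ = (∂A/∂t)(q,1) ∈ ℚ⟦q⟧. Let A_γ ∈ (ℚ[t])⟦q⟧ be the series whose coefficient of qⁿtᵏ is the number of column-convex polyominoes with area n and at least two columns whose last column has height k and which do NOT contain their pivot cell. Then (1 − qt) · A_γ = qt · B₁ (equivalently, A_γ = qt/(1−qt) · B₁). -/
open Finset Filter

noncomputable section

/-- Number of column-convex polyominoes with area `n` whose last column has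
height `k`, counted up to translation. -/
def ccCountHt (n k : ℕ) : ℕ :=
  Nat.card {P : Finset Cell // IsPolyomino P ∧ ColumnConvex P ∧ Normalized P ∧
    P.card = n ∧ heightN (lastCol P) = k}

/-- The area and last column generating function `A ∈ (ℚ[t])⟦q⟧` of
column-convex polyominoes: the coefficient of `qⁿtᵏ` is `ccCountHt n k`
(the height of the last column never exceeds the area). -/
def Aser : PowerSeries (Polynomial ℚ) :=
  PowerSeries.mk fun n =>
    ∑ k ∈ Finset.range (n + 1), Polynomial.C (ccCountHt n k : ℚ) * Polynomial.X ^ k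

/-- `A₁ = A(q,1)`. -/
def A1 : PowerSeries ℚ :=
  PowerSeries.mk fun n => Polynomial.eval 1 (PowerSeries.coeff n Aser)

/-- `B₁ = (∂A/∂t)(q,1)`. -/
def B1 : PowerSeries ℚ :=
  PowerSeries.mk fun n =>
    Polynomial.eval 1 (Polynomial.derivative (PowerSeries.coeff n Aser))

/-- Embedding of `ℚ⟦q⟧` into `(ℚ[t])⟦q⟧`. -/
def liftP : PowerSeries ℚ →+* PowerSeries (Polynomial ℚ) :=
  PowerSeries.map (Polynomial.C : ℚ →+* Polynomial ℚ)

/-- The variable `q` of `(ℚ[t])⟦q⟧`. -/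
def qp : PowerSeries (Polynomial ℚ) := PowerSeries.X

/-- The variable `t` of `(ℚ[t])⟦q⟧`. -/
def tp : PowerSeries (Polynomial ℚ) := PowerSeries.C Polynomial.X

/-- Number of column-convex polyominoes with area `n` and at least two columns,
whose last column has height `k`, and which do not contain their pivot cell
(the lower right neighbour of the lowest cell of the second-last column). -/
def ccGammaCount (n k : ℕ) : ℕ :=
  Nat.card {P : Finset Cell // IsPolyomino P ∧ ColumnConvex P ∧ Normalized P ∧
    P.card = n ∧ 2 ≤ (P.image Prod.fst).card ∧ heightN (lastCol P) = k ∧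
    (maxX P, WithTop.untopD 0 (columnYs P (maxX P - 1)).min) ∉ P}

/-- The generating function `A_γ` of column-convex polyominoes not containing
their pivot cell. -/
def Agamma : PowerSeries (Polynomial ℚ) :=
  PowerSeries.mk fun n =>
    ∑ k ∈ Finset.range (n + 1), Polynomial.C (ccGammaCount n k : ℚ) * Polynomial.X ^ k

/-!
Removing the last column of a polyomino counted by `A_γ` leaves a column-convex polyomino
together with a marked cell of its new last column, the lower left neighbour of the lowest
removed cell: the pivot cell lies outside `P` exactly when that neighbour lies in `P`.
Conversely, gluing a column of height `k ≥ 1` whose lowest cell is the upper right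
neighbour of a marked cell gives back such a polyomino. So for `1 ≤ k ≤ n` the coefficient of
`qⁿtᵏ` in `A_γ` is the number of marked column-convex polyominoes of area `n - k`, which is
the coefficient of `qⁿ⁻ᵏ` in `B₁`; in other words `A_γ = ∑_{k ≥ 1} (qt)ᵏ B₁`.
-/

section Intervals

lemma numComponents_Icc {a b : ℤ} (h : a ≤ b) : numComponents (Icc a b) = 1 := by
  have : (Icc a b).filter (fun x => x - 1 ∉ Icc a b) = {a} := by
    ext x
    simp only [mem_filter, mem_Icc, mem_singleton]
    omega
  rw [numComponents, this, card_singleton]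

/-- Between two elements of a one-component set there is no hole: otherwise both the least
element and the least element above the hole would start a component. -/
lemma mem_of_numComponents_eq_one {s : Finset ℤ} (h1 : numComponents s = 1) {a b c : ℤ}
    (ha : a ∈ s) (hb : b ∈ s) (hac : a ≤ c) (hcb : c ≤ b) : c ∈ s := by
  by_contra hc
  have hs : s.Nonempty := ⟨a, ha⟩
  have hne : (s.filter (c < ·)).Nonempty :=
    ⟨b, mem_filter.mpr ⟨hb, lt_of_le_of_ne hcb (fun h => hc (h ▸ hb))⟩⟩
  set u := (s.filter (c < ·)).min' hne
  obtain ⟨hus, hcu⟩ := mem_filter.mp ((s.filter (c < ·)).min'_mem hne)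
  have hstart_min : s.min' hs ∈ s.filter (fun x => x - 1 ∉ s) :=
    mem_filter.mpr ⟨s.min'_mem hs, fun h => by have := s.min'_le _ h; omega⟩
  have hstart_u : u ∈ s.filter (fun x => x - 1 ∉ s) := by
    refine mem_filter.mpr ⟨hus, fun h => ?_⟩
    rcases lt_trichotomy (u - 1) c with h' | h' | h'
    · omega
    · exact hc (h' ▸ h)
    · have := (s.filter (c < ·)).min'_le (u - 1) (mem_filter.mpr ⟨h, h'⟩)
      omega
  have hmin_lt : s.min' hs < u := by have := s.min'_le a ha; omega
  have : 1 < numComponents s :=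
    one_lt_card.mpr ⟨u, hstart_u, s.min' hs, hstart_min, hmin_lt.ne'⟩
  omega

lemma eq_Icc_of_numComponents_eq_one {s : Finset ℤ} (hs : s.Nonempty)
    (h1 : numComponents s = 1) : s = Icc (s.min' hs) (s.max' hs) := by
  ext c
  rw [mem_Icc]
  exact ⟨fun h => ⟨s.min'_le c h, s.le_max' c h⟩,
    fun h => mem_of_numComponents_eq_one h1 (s.min'_mem hs) (s.max'_mem hs) h.1 h.2⟩

lemma untopD_min_eq_min' {s : Finset ℤ} (hs : s.Nonempty) :
    WithTop.untopD 0 s.min = s.min' hs := by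
  rw [← coe_min' hs]; rfl

lemma unbotD_max_eq_max' {s : Finset ℤ} (hs : s.Nonempty) :
    WithBot.unbotD 0 s.max = s.max' hs := by
  rw [← coe_max' hs]; rfl

lemma untopD_min_Icc {a b : ℤ} (h : a ≤ b) : WithTop.untopD 0 (Icc a b).min = a := by
  rw [untopD_min_eq_min' (nonempty_Icc.mpr h)]
  exact le_antisymm (min'_le _ _ (left_mem_Icc.mpr h))
    (le_min' _ _ _ fun y hy => (mem_Icc.mp hy).1)

lemma unbotD_max_Icc {a b : ℤ} (h : a ≤ b) : WithBot.unbotD 0 (Icc a b).max = b := by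
  rw [unbotD_max_eq_max' (nonempty_Icc.mpr h)]
  exact le_antisymm (max'_le _ _ _ fun y hy => (mem_Icc.mp hy).2)
    (le_max' _ _ (right_mem_Icc.mpr h))

lemma heightN_Icc {a b : ℤ} (h : a ≤ b) : heightN (Icc a b) = (b - a + 1).toNat := by
  rw [heightN, untopD_min_Icc h, unbotD_max_Icc h]

lemma one_le_heightN {s : Finset ℤ} (hs : s.Nonempty) : 1 ≤ heightN s := by
  have := s.min'_le _ (s.max'_mem hs)
  rw [heightN, untopD_min_eq_min' hs, unbotD_max_eq_max' hs]
  omega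

lemma card_eq_heightN {s : Finset ℤ} (hs : s.Nonempty) (h1 : numComponents s = 1) :
    s.card = heightN s := by
  have hle : s.min' hs ≤ s.max' hs := min'_le _ _ (max'_mem _ _)
  rw [eq_Icc_of_numComponents_eq_one hs h1, Int.card_Icc, heightN_Icc hle]
  omega

end Intervals

section Columns

lemma hexAdj_symm {a b : Cell} (h : HexAdj a b) : HexAdj b a := by
  simp only [HexAdj, Set.mem_insert_iff, Set.mem_singleton_iff, Prod.mk.injEq] at h ⊢
  omega

lemma hexAdj_fst_le {a b : Cell} (h : HexAdj a b) : b.1 ≤ a.1 + 1 := by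
  simp only [HexAdj, Set.mem_insert_iff, Set.mem_singleton_iff, Prod.mk.injEq] at h
  omega

lemma hexAdj_snd_le {a b : Cell} (h : HexAdj a b) : b.2 ≤ a.2 + 1 := by
  simp only [HexAdj, Set.mem_insert_iff, Set.mem_singleton_iff, Prod.mk.injEq] at h
  omega

lemma hexAdj_right_snd {x y y' : ℤ} (h : HexAdj (x, y) (x + 1, y')) : y' = y ∨ y' = y + 1 := by
  simp only [HexAdj, Set.mem_insert_iff, Set.mem_singleton_iff, Prod.mk.injEq] at h
  omega

lemma hexAdj_up (x y : ℤ) : HexAdj (x, y) (x, y + 1) := by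
  simp [HexAdj]

lemma hexAdj_upper_right (x y : ℤ) : HexAdj (x, y) (x + 1, y + 1) := by
  simp [HexAdj]

@[simp]
lemma mem_columnYs {P : Finset Cell} {x y : ℤ} : y ∈ columnYs P x ↔ (x, y) ∈ P := by
  simp [columnYs]

lemma ColumnConvex.mem_of_le_of_le {P : Finset Cell} (hcc : ColumnConvex P) {x y y' z : ℤ}
    (hy : (x, y) ∈ P) (hy' : (x, y') ∈ P) (h1 : y ≤ z) (h2 : z ≤ y') : (x, z) ∈ P :=
  mem_columnYs.mp <| mem_of_numComponents_eq_one (hcc x ⟨y, mem_columnYs.mpr hy⟩)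
    (mem_columnYs.mpr hy) (mem_columnYs.mpr hy') h1 h2

lemma ColumnConvex.exists_eq_Icc {P : Finset Cell} (hcc : ColumnConvex P) {x : ℤ}
    (hne : (columnYs P x).Nonempty) : ∃ a b, a ≤ b ∧ columnYs P x = Icc a b :=
  ⟨_, _, min'_le _ _ (max'_mem _ hne), eq_Icc_of_numComponents_eq_one hne (hcc x hne)⟩

end Columns

section Connectivity

def AdjIn (P : Finset Cell) (u v : Cell) : Prop := u ∈ P ∧ v ∈ P ∧ HexAdj u v

instance (P : Finset Cell) : Std.Symm (AdjIn P) where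
  symm _ _ h := ⟨h.2.1, h.1, hexAdj_symm h.2.2⟩

/-- Discrete intermediate value theorem along a path whose steps raise `f` by at most one. -/
lemma exists_mem_eq_of_reflTransGen (f : Cell → ℤ)
    (hf : ∀ a b, HexAdj a b → f b ≤ f a + 1) {P : Finset Cell} {a b : Cell}
    (hab : Relation.ReflTransGen (AdjIn P) a b) (ha : a ∈ P)
    {z : ℤ} (hz₁ : f a ≤ z) (hz₂ : z ≤ f b) : ∃ u ∈ P, f u = z := by
  induction hab with
  | refl => exact ⟨a, ha, by omega⟩
  | @tail c b _ hcb ih =>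
    by_cases h : z ≤ f c
    · exact ih h
    · exact ⟨b, hcb.2.1, by have := hf c b hcb.2.2; omega⟩

lemma exists_adjIn_crossing {P : Finset Cell} {a b : Cell}
    (hab : Relation.ReflTransGen (AdjIn P) a b) {x : ℤ} (hx₁ : a.1 ≤ x) (hx₂ : x < b.1) :
    ∃ u v, AdjIn P u v ∧ u.1 = x ∧ v.1 = x + 1 := by
  induction hab with
  | refl => omega
  | @tail c b _ hcb ih =>
    by_cases h : x < c.1
    · exact ih h
    · exact ⟨c, b, hcb, by have := hexAdj_fst_le hcb.2.2; omega⟩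

lemma IsPolyomino.exists_mem_of_le_of_le {P : Finset Cell} (hP : IsPolyomino P) {c c' : Cell}
    (hc : c ∈ P) (hc' : c' ∈ P) {x : ℤ} (h₁ : c.1 ≤ x) (h₂ : x ≤ c'.1) :
    ∃ y, (x, y) ∈ P := by
  obtain ⟨u, hu, rfl⟩ := exists_mem_eq_of_reflTransGen Prod.fst (fun _ _ h => hexAdj_fst_le h)
    (hP.2 c hc c' hc') hc h₁ h₂
  exact ⟨u.2, hu⟩

lemma IsPolyomino.exists_adj_columns {P : Finset Cell} (hP : IsPolyomino P) {x y₀ y₁ : ℤ}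
    (h₀ : (x, y₀) ∈ P) (h₁ : (x + 1, y₁) ∈ P) :
    ∃ y y', (x, y) ∈ P ∧ (x + 1, y') ∈ P ∧ HexAdj (x, y) (x + 1, y') := by
  obtain ⟨⟨ux, uy⟩, ⟨vx, vy⟩, ⟨hu, hv, huv⟩, rfl, rfl⟩ :=
    exists_adjIn_crossing (hP.2 _ h₀ _ h₁) le_rfl (lt_add_one x)
  exact ⟨uy, vy, hu, hv, huv⟩

lemma ColumnConvex.reflTransGen_of_mem {P : Finset Cell} (hcc : ColumnConvex P) {x y y' : ℤ}
    (h : (x, y) ∈ P) (h' : (x, y') ∈ P) : Relation.ReflTransGen (AdjIn P) (x, y) (x, y') := by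
  wlog hle : y ≤ y' generalizing y y'
  · exact Std.Symm.symm _ _ (this h' h (by omega))
  induction y', hle using Int.leInduction with
  | base => rfl
  | succ n hn ih =>
    have hn' : (x, n) ∈ P := hcc.mem_of_le_of_le h h' hn (by omega)
    exact (ih hn').tail ⟨hn', h', hexAdj_up x n⟩

lemma isPolyomino_of_columnConvex {P : Finset Cell} (hne : P.Nonempty) (hcc : ColumnConvex P)
    (hbetween : ∀ c ∈ P, ∀ c' ∈ P, ∀ x, c.1 ≤ x → x ≤ c'.1 → ∃ y, (x, y) ∈ P)
    (hadj : ∀ x y₀ y₁, (x, y₀) ∈ P → (x + 1, y₁) ∈ P →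
      ∃ y y', (x, y) ∈ P ∧ (x + 1, y') ∈ P ∧ HexAdj (x, y) (x + 1, y')) :
    IsPolyomino P := by
  refine ⟨hne, show ∀ a ∈ P, ∀ b ∈ P, Relation.ReflTransGen (AdjIn P) a b from ?_⟩
  have rightward : ∀ x y, (x, y) ∈ P → ∀ x', x ≤ x' → ∀ y', (x', y') ∈ P →
      Relation.ReflTransGen (AdjIn P) (x, y) (x', y') := by
    intro x y h x' hx'
    induction x', hx' using Int.leInduction with
    | base => exact fun y' h' => hcc.reflTransGen_of_mem h h'
    | succ x' hx' ih =>
      intro y' h'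
      obtain ⟨y'', h''⟩ := hbetween _ h _ h' x' hx' (by simp)
      obtain ⟨b₀, b₁, hb₀, hb₁, hb⟩ := hadj x' y'' y' h'' h'
      exact ((ih y'' h'').trans (hcc.reflTransGen_of_mem h'' hb₀)).trans
        ((Relation.ReflTransGen.single ⟨hb₀, hb₁, hb⟩).trans
          (hcc.reflTransGen_of_mem hb₁ h'))
  rintro ⟨x, y⟩ h ⟨x', y'⟩ h'
  rcases le_total x x' with hle | hle
  · exact rightward x y h x' hle y' h'
  · exact Std.Symm.symm _ _ (rightward x' y' h' x hle y h)

end Connectivity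

section LastColumn

variable {P : Finset Cell}

lemma maxX_eq_max' (hne : P.Nonempty) : maxX P = (P.image Prod.fst).max' (hne.image _) := by
  rw [maxX, ← coe_max' (hne.image _)]; rfl

lemma le_maxX {c : Cell} (hc : c ∈ P) : c.1 ≤ maxX P := by
  rw [maxX_eq_max' ⟨c, hc⟩]
  exact le_max' _ _ (mem_image_of_mem _ hc)

lemma exists_mem_maxX (hne : P.Nonempty) : ∃ y, (maxX P, y) ∈ P := by
  obtain ⟨⟨x, y⟩, hc, hx⟩ := mem_image.mp ((P.image Prod.fst).max'_mem (hne.image _))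
  exact ⟨y, by rwa [maxX_eq_max' hne, ← hx]⟩

lemma maxX_eq_of_forall_le {x : ℤ} (hle : ∀ c ∈ P, c.1 ≤ x) {y : ℤ} (hxy : (x, y) ∈ P) :
    maxX P = x := by
  obtain ⟨y', hy'⟩ := exists_mem_maxX ⟨_, hxy⟩
  exact le_antisymm (hle _ hy') (le_maxX hxy)

lemma lastCol_nonempty (hne : P.Nonempty) : (lastCol P).Nonempty := by
  obtain ⟨y, hy⟩ := exists_mem_maxX hne
  exact ⟨y, mem_columnYs.mpr hy⟩

lemma IsPolyomino.exists_mem_maxX_sub_one (hP : IsPolyomino P)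
    (h2 : 2 ≤ (P.image Prod.fst).card) : ∃ y, (maxX P - 1, y) ∈ P := by
  obtain ⟨x₁, hx₁, x₂, hx₂, hne⟩ := one_lt_card.mp h2
  obtain ⟨c, hc, hcx⟩ : ∃ c ∈ P, c.1 < maxX P := by
    obtain ⟨c₁, hc₁, rfl⟩ := mem_image.mp hx₁
    obtain ⟨c₂, hc₂, rfl⟩ := mem_image.mp hx₂
    rcases (le_maxX hc₁).lt_or_eq with h | h
    · exact ⟨c₁, hc₁, h⟩
    · exact ⟨c₂, hc₂, lt_of_le_of_ne (le_maxX hc₂) (by omega)⟩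
  obtain ⟨y, hy⟩ := exists_mem_maxX hP.1
  exact hP.exists_mem_of_le_of_le hc hy (by omega) (by simp)

/-- Writing `a` for the bottom of the second-last column and `m` for the bottom of the last
one, both conditions say `a < m`: the last column is an interval which meets the upper right
of the second-last one. -/
lemma pivot_not_mem_iff (hP : IsPolyomino P) (hcc : ColumnConvex P)
    (h : (columnYs P (maxX P - 1)).Nonempty) :
    (maxX P, WithTop.untopD 0 (columnYs P (maxX P - 1)).min) ∉ P ↔
      (maxX P - 1, WithTop.untopD 0 (lastCol P).min - 1) ∈ P := by
  set L := maxX P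
  have ht := lastCol_nonempty hP.1
  rw [untopD_min_eq_min' h, untopD_min_eq_min' ht]
  set a := (columnYs P (L - 1)).min' h
  set m := (lastCol P).min' ht
  have ha : (L - 1, a) ∈ P := mem_columnYs.mp ((columnYs P (L - 1)).min'_mem h)
  have hm : (L, m) ∈ P := mem_columnYs.mp ((lastCol P).min'_mem ht)
  constructor
  · intro hpivot
    obtain ⟨y, y', hy, hy', hyy'⟩ :=
      hP.exists_adj_columns (x := L - 1) ha (by rwa [sub_add_cancel])
    have hstep := hexAdj_right_snd hyy'
    rw [sub_add_cancel] at hy'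
    have hmy' : m ≤ y' := (lastCol P).min'_le _ (mem_columnYs.mpr hy')
    have hay : a ≤ y := (columnYs P (L - 1)).min'_le _ (mem_columnYs.mpr hy)
    have ham : a < m := by
      by_contra! hma
      exact hpivot (hcc.mem_of_le_of_le hm hy' hma (by omega))
    exact hcc.mem_of_le_of_le ha hy (by omega) (by omega)
  · intro hm' hpivot
    have := (lastCol P).min'_le a (mem_columnYs.mpr hpivot)
    have := (columnYs P (L - 1)).min'_le _ (mem_columnYs.mpr hm')
    omega

end LastColumn

section DropLastColumn

def dropLastCol (P : Finset Cell) : Finset Cell := P.filter (·.1 ≠ maxX P)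

/-- Glue on the right of `Q` a column of height `k` whose lowest cell is the upper right
neighbour of `(maxX Q, c)`. -/
def appendCol (Q : Finset Cell) (c : ℤ) (k : ℕ) : Finset Cell :=
  Q ∪ (Icc (c + 1) (c + k)).image (maxX Q + 1, ·)

variable {P Q : Finset Cell} {c : ℤ} {k : ℕ}

lemma mem_dropLastCol {u : Cell} : u ∈ dropLastCol P ↔ u ∈ P ∧ u.1 ≠ maxX P :=
  mem_filter

lemma mem_appendCol {u : Cell} :
    u ∈ appendCol Q c k ↔ u ∈ Q ∨ u.1 = maxX Q + 1 ∧ c + 1 ≤ u.2 ∧ u.2 ≤ c + k := by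
  obtain ⟨x, y⟩ := u
  simp only [appendCol, mem_union, mem_image, mem_Icc, Prod.mk.injEq]
  constructor
  · rintro (h | ⟨y, hy, rfl, rfl⟩)
    exacts [.inl h, .inr ⟨rfl, hy⟩]
  · rintro (h | ⟨rfl, hy⟩)
    exacts [.inl h, .inr ⟨y, hy, rfl, rfl⟩]

lemma columnYs_dropLastCol {x : ℤ} (hx : x ≠ maxX P) :
    columnYs (dropLastCol P) x = columnYs P x := by
  ext y
  simp [mem_dropLastCol, hx]

lemma maxX_dropLastCol {y : ℤ} (h : (maxX P - 1, y) ∈ P) :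
    maxX (dropLastCol P) = maxX P - 1 :=
  maxX_eq_of_forall_le
    (fun u hu => by
      obtain ⟨hu, hne⟩ := mem_dropLastCol.mp hu
      have := le_maxX hu
      omega)
    (mem_dropLastCol.mpr ⟨h, by simp⟩)

lemma lastCol_dropLastCol {y : ℤ} (h : (maxX P - 1, y) ∈ P) :
    lastCol (dropLastCol P) = columnYs P (maxX P - 1) := by
  rw [lastCol, maxX_dropLastCol h, columnYs_dropLastCol (by omega)]

lemma ColumnConvex.dropLastCol (hcc : ColumnConvex P) : ColumnConvex (dropLastCol P) := by
  intro x hx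
  have hxL : x ≠ maxX P := by
    rintro rfl
    obtain ⟨y, hy⟩ := hx
    exact (mem_dropLastCol.mp (mem_columnYs.mp hy)).2 rfl
  rw [columnYs_dropLastCol hxL] at hx ⊢
  exact hcc x hx

lemma IsPolyomino.dropLastCol (hP : IsPolyomino P) (hcc : ColumnConvex P) {y : ℤ}
    (h : (maxX P - 1, y) ∈ P) : IsPolyomino (dropLastCol P) := by
  have mem_of_lt : ∀ {u : Cell}, u ∈ P → u.1 < maxX P → u ∈ _root_.dropLastCol P :=
    fun hu hlt => mem_dropLastCol.mpr ⟨hu, hlt.ne⟩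
  have lt_of_mem : ∀ {u : Cell}, u ∈ _root_.dropLastCol P → u.1 < maxX P := fun hu =>
    lt_of_le_of_ne (le_maxX (mem_dropLastCol.mp hu).1) (mem_dropLastCol.mp hu).2
  refine isPolyomino_of_columnConvex ⟨_, mem_of_lt h (by simp)⟩ hcc.dropLastCol ?_ ?_
  · intro u hu u' hu' x h₁ h₂
    obtain ⟨y, hy⟩ := hP.exists_mem_of_le_of_le (mem_dropLastCol.mp hu).1
      (mem_dropLastCol.mp hu').1 h₁ h₂
    exact ⟨y, mem_of_lt hy (by have := lt_of_mem hu'; simp only at this ⊢; omega)⟩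
  · intro x y₀ y₁ h₀ h₁
    have hx := lt_of_mem h₁
    obtain ⟨y, y', hy, hy', hyy'⟩ :=
      hP.exists_adj_columns (mem_dropLastCol.mp h₀).1 (mem_dropLastCol.mp h₁).1
    exact ⟨y, y', mem_of_lt hy (by simp only at hx ⊢; omega), mem_of_lt hy' hx, hyy'⟩

lemma Normalized.dropLastCol (hN : Normalized P)
    (h : (maxX P - 1, WithTop.untopD 0 (lastCol P).min - 1) ∈ P) :
    Normalized (dropLastCol P) := by
  obtain ⟨hpos, ⟨u, hu, hu0⟩, ⟨v, hv, hv0⟩⟩ := hN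
  have hbelow := hpos _ h
  simp only at hbelow
  refine ⟨fun w hw => hpos w (mem_dropLastCol.mp hw).1,
    ⟨u, mem_dropLastCol.mpr ⟨hu, by omega⟩, hu0⟩,
    ⟨v, mem_dropLastCol.mpr ⟨hv, ?_⟩, hv0⟩⟩
  intro hvL
  have hvcol : v.2 ∈ lastCol P := mem_columnYs.mpr (by rw [← hvL]; exact hv)
  have := (lastCol P).min'_le _ hvcol
  rw [untopD_min_eq_min' ⟨_, hvcol⟩] at hbelow
  omega

lemma appendCol_dropLastCol (hcc : ColumnConvex P) {y : ℤ} (h : (maxX P - 1, y) ∈ P) :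
    appendCol (dropLastCol P) (WithTop.untopD 0 (lastCol P).min - 1) (heightN (lastCol P)) =
      P := by
  obtain ⟨a, b, hab, hIcc⟩ := hcc.exists_eq_Icc (lastCol_nonempty ⟨_, h⟩)
  rw [lastCol] at *
  rw [hIcc, untopD_min_Icc hab, heightN_Icc hab]
  ext ⟨x, y⟩
  have hlast : (x, y) ∈ P ∧ x = maxX P ↔ x = maxX P ∧ a ≤ y ∧ y ≤ b := by
    rw [← mem_Icc, ← hIcc, mem_columnYs]
    constructor
    · rintro ⟨hxy, rfl⟩; exact ⟨rfl, hxy⟩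
    · rintro ⟨rfl, hxy⟩; exact ⟨hxy, rfl⟩
  rw [mem_appendCol, mem_dropLastCol, maxX_dropLastCol h]
  simp only
  constructor
  · rintro (⟨hxy, -⟩ | ⟨hx, hy⟩)
    · exact hxy
    · exact (hlast.mpr ⟨by omega, by omega, by omega⟩).1
  · intro hxy
    by_cases hx : x = maxX P
    · have := hlast.mp ⟨hxy, hx⟩; exact .inr ⟨by omega, by omega, by omega⟩
    · exact .inl ⟨hxy, hx⟩

end DropLastColumn

section AppendColumn

variable {Q : Finset Cell} {c : ℤ} {k : ℕ}

lemma maxX_appendCol (hk : 1 ≤ k) : maxX (appendCol Q c k) = maxX Q + 1 :=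
  maxX_eq_of_forall_le
    (fun u hu => by
      rcases mem_appendCol.mp hu with hu | hu
      · have := le_maxX hu; omega
      · exact hu.1.le)
    (y := c + 1) (mem_appendCol.mpr (.inr ⟨rfl, le_rfl, by omega⟩))

lemma columnYs_appendCol {x : ℤ} (hx : x ≠ maxX Q + 1) :
    columnYs (appendCol Q c k) x = columnYs Q x := by
  ext y
  simp [mem_appendCol, hx]

lemma lastCol_appendCol (hk : 1 ≤ k) : lastCol (appendCol Q c k) = Icc (c + 1) (c + k) := by
  ext y
  rw [lastCol, maxX_appendCol hk, mem_columnYs, mem_appendCol, mem_Icc]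
  have : (maxX Q + 1, y) ∉ Q := fun h => by have := le_maxX h; simp at this
  simp [this]

lemma dropLastCol_appendCol (hk : 1 ≤ k) : dropLastCol (appendCol Q c k) = Q := by
  ext u
  rw [mem_dropLastCol, maxX_appendCol hk, mem_appendCol]
  constructor
  · rintro ⟨hu | hu, hne⟩
    exacts [hu, absurd hu.1 hne]
  · intro hu
    exact ⟨.inl hu, by have := le_maxX hu; omega⟩

lemma card_appendCol : (appendCol Q c k).card = Q.card + k := by
  rw [appendCol, card_union_of_disjoint, card_image_of_injective _ (Prod.mk_right_injective _),
    Int.card_Icc]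
  · omega
  · refine disjoint_left.mpr fun u hu hu' => ?_
    obtain ⟨y, -, rfl⟩ := mem_image.mp hu'
    have := le_maxX hu
    simp at this

lemma ColumnConvex.appendCol (hcc : ColumnConvex Q) (hk : 1 ≤ k) :
    ColumnConvex (appendCol Q c k) := by
  intro x hx
  by_cases hxL : x = maxX Q + 1
  · rw [hxL, ← maxX_appendCol hk, ← lastCol, lastCol_appendCol hk]
    exact numComponents_Icc (by omega)
  · rw [columnYs_appendCol hxL] at hx ⊢
    exact hcc x hx

lemma IsPolyomino.appendCol (hQ : IsPolyomino Q) (hcc : ColumnConvex Q) (hc : c ∈ lastCol Q)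
    (hk : 1 ≤ k) : IsPolyomino (appendCol Q c k) := by
  have hcQ : (maxX Q, c) ∈ Q := mem_columnYs.mp hc
  have hnew : (maxX Q + 1, c + 1) ∈ _root_.appendCol Q c k :=
    mem_appendCol.mpr (.inr ⟨rfl, le_rfl, by omega⟩)
  have mem_of_le : ∀ {u : Cell}, u ∈ _root_.appendCol Q c k → u.1 ≤ maxX Q → u ∈ Q :=
    fun hu hle => (mem_appendCol.mp hu).resolve_right (by omega)
  have le_of_mem : ∀ {u : Cell}, u ∈ _root_.appendCol Q c k → u.1 ≤ maxX Q + 1 :=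
    fun hu => maxX_appendCol (Q := Q) (c := c) hk ▸ le_maxX hu
  refine isPolyomino_of_columnConvex ⟨_, hnew⟩ (hcc.appendCol hk) ?_ ?_
  · intro u hu u' hu' x h₁ h₂
    by_cases hx : x = maxX Q + 1
    · exact ⟨c + 1, hx ▸ hnew⟩
    · have := le_of_mem hu'
      obtain ⟨y, hy⟩ := hQ.exists_mem_of_le_of_le (mem_of_le hu (by omega)) hcQ h₁ (by omega)
      exact ⟨y, mem_union_left _ hy⟩
  · intro x y₀ y₁ h₀ h₁
    have := le_of_mem h₁
    by_cases hx : x = maxX Q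
    · subst hx
      exact ⟨c, c + 1, mem_union_left _ hcQ, hnew, hexAdj_upper_right _ _⟩
    · obtain ⟨y, y', hy, hy', hyy'⟩ :=
        hQ.exists_adj_columns (mem_of_le h₀ (by simp only; omega))
          (mem_of_le h₁ (by simp only; omega))
      exact ⟨y, y', mem_union_left _ hy, mem_union_left _ hy', hyy'⟩

lemma Normalized.appendCol (hN : Normalized Q) (hc : c ∈ lastCol Q) :
    Normalized (appendCol Q c k) := by
  obtain ⟨hpos, ⟨u, hu, hu0⟩, ⟨v, hv, hv0⟩⟩ := hN
  have hc0 := hpos _ (mem_columnYs.mp hc)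
  refine ⟨fun w hw => ?_, ⟨u, mem_union_left _ hu, hu0⟩, ⟨v, mem_union_left _ hv, hv0⟩⟩
  rcases mem_appendCol.mp hw with hw | hw
  · exact hpos w hw
  · simp only at hc0; omega

end AppendColumn

section Bijection

def IsGammaCC (n k : ℕ) (P : Finset Cell) : Prop :=
  IsPolyomino P ∧ ColumnConvex P ∧ Normalized P ∧ P.card = n ∧
    2 ≤ (P.image Prod.fst).card ∧ heightN (lastCol P) = k ∧
    (maxX P, WithTop.untopD 0 (columnYs P (maxX P - 1)).min) ∉ P

/-- The marked cell of the last column is recorded by its ordinate; by `natCard_markedCC`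
these pairs are counted by the coefficient of `qᵐ` in `B₁`. -/
def markedCC (m : ℕ) : Set (Finset Cell × ℤ) :=
  {qc | (IsPolyomino qc.1 ∧ ColumnConvex qc.1 ∧ Normalized qc.1 ∧ qc.1.card = m) ∧
    qc.2 ∈ lastCol qc.1}

/-- Marks the lower left neighbour of the lowest cell of the removed column. -/
def removeLastCol (P : Finset Cell) : Finset Cell × ℤ :=
  (dropLastCol P, WithTop.untopD 0 (lastCol P).min - 1)

variable {n k : ℕ} {P : Finset Cell}

lemma IsGammaCC.removeLastCol_mem (h : IsGammaCC n k P) : removeLastCol P ∈ markedCC (n - k) := by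
  obtain ⟨hP, hcc, hN, hcard, h2, hk, hpivot⟩ := h
  obtain ⟨y, hy⟩ := hP.exists_mem_maxX_sub_one h2
  have hbelow := (pivot_not_mem_iff hP hcc ⟨y, mem_columnYs.mpr hy⟩).mp hpivot
  have hcard' := congrArg Finset.card (appendCol_dropLastCol hcc hy)
  rw [card_appendCol, hcard, hk] at hcard'
  refine ⟨⟨hP.dropLastCol hcc hy, hcc.dropLastCol, hN.dropLastCol hbelow,
    (by omega : (dropLastCol P).card = n - k)⟩, ?_⟩
  rw [removeLastCol, lastCol_dropLastCol hy]
  exact mem_columnYs.mpr hbelow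

lemma isGammaCC_appendCol (hk : 1 ≤ k) {m : ℕ} {qc : Finset Cell × ℤ}
    (h : qc ∈ markedCC m) :
    IsGammaCC (m + k) k (appendCol qc.1 qc.2 k) := by
  obtain ⟨Q, c⟩ := qc
  obtain ⟨⟨hQ, hcc, hN, hcard⟩, hc⟩ := h
  have hcQ : (maxX Q, c) ∈ appendCol Q c k := mem_union_left _ (mem_columnYs.mp hc)
  have hsecond : columnYs (appendCol Q c k) (maxX (appendCol Q c k) - 1) = lastCol Q := by
    rw [maxX_appendCol hk, add_sub_cancel_right, columnYs_appendCol (by omega), lastCol]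
  refine ⟨hQ.appendCol hcc hc hk, hcc.appendCol hk, hN.appendCol hc,
    by rw [card_appendCol, hcard], ?_, ?_, ?_⟩
  · refine one_lt_card.mpr ⟨maxX Q, mem_image_of_mem _ hcQ, maxX Q + 1, ?_, by omega⟩
    have hnew : (maxX Q + 1, c + 1) ∈ appendCol Q c k :=
      mem_appendCol.mpr (.inr ⟨rfl, le_rfl, by omega⟩)
    exact mem_image_of_mem Prod.fst hnew
  · rw [lastCol_appendCol hk, heightN_Icc (by omega)]
    omega
  · rw [pivot_not_mem_iff (hQ.appendCol hcc hc hk) (hcc.appendCol hk) (hsecond ▸ ⟨c, hc⟩),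
      lastCol_appendCol hk, untopD_min_Icc (by omega), maxX_appendCol hk]
    simpa using hcQ

lemma removeLastCol_appendCol (hk : 1 ≤ k) (Q : Finset Cell) (c : ℤ) :
    removeLastCol (appendCol Q c k) = (Q, c) := by
  rw [removeLastCol, dropLastCol_appendCol hk, lastCol_appendCol hk, untopD_min_Icc (by omega)]
  simp

lemma IsGammaCC.appendCol_removeLastCol (h : IsGammaCC n k P) :
    appendCol (removeLastCol P).1 (removeLastCol P).2 k = P := by
  obtain ⟨hP, hcc, -, -, h2, rfl, -⟩ := h
  obtain ⟨y, hy⟩ := hP.exists_mem_maxX_sub_one h2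
  exact appendCol_dropLastCol hcc hy

lemma ccGammaCount_eq_natCard_markedCC (hk : 1 ≤ k) (hkn : k ≤ n) :
    ccGammaCount n k = Nat.card (markedCC (n - k)) :=
  Nat.card_congr
    { toFun := fun P => ⟨removeLastCol P.1, IsGammaCC.removeLastCol_mem P.2⟩
      invFun := fun qc => ⟨appendCol qc.1.1 qc.1.2 k, by
        have h := isGammaCC_appendCol hk qc.2
        rwa [Nat.sub_add_cancel hkn] at h⟩
      left_inv := fun P => Subtype.ext (IsGammaCC.appendCol_removeLastCol P.2)
      right_inv := fun qc => Subtype.ext (removeLastCol_appendCol hk _ _) }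

end Bijection

section Counting

/-- All values of `f` between `0` and `f c` are attained on `P`. -/
lemma IsPolyomino.le_card_of_eq_zero {P : Finset Cell} (hP : IsPolyomino P) (f : Cell → ℤ)
    (hf : ∀ a b, HexAdj a b → f b ≤ f a + 1) {u c : Cell} (hu : u ∈ P) (hu0 : f u = 0)
    (hc : c ∈ P) : f c + 1 ≤ P.card := by
  have hsub : Icc 0 (f c) ⊆ P.image f := fun z hz => by
    obtain ⟨w, hw, rfl⟩ := exists_mem_eq_of_reflTransGen f hf (hP.2 u hu c hc) hu
      (by rw [hu0]; exact (mem_Icc.mp hz).1) (mem_Icc.mp hz).2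
    exact mem_image_of_mem f hw
  have := (card_le_card hsub).trans card_image_le
  rw [Int.card_Icc] at this
  omega

lemma IsPolyomino.subset_Icc {P : Finset Cell} (hP : IsPolyomino P) (hN : Normalized P) :
    P ⊆ Icc (0, 0) ((P.card : ℤ), (P.card : ℤ)) := by
  obtain ⟨hpos, ⟨u, hu, hu0⟩, ⟨v, hv, hv0⟩⟩ := hN
  intro c hc
  have h₁ := hP.le_card_of_eq_zero Prod.fst (fun _ _ h => hexAdj_fst_le h) hu hu0 hc
  have h₂ := hP.le_card_of_eq_zero Prod.snd (fun _ _ h => hexAdj_snd_le h) hv hv0 hc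
  rw [mem_Icc, Prod.le_def, Prod.le_def]
  exact ⟨hpos c hc, by omega, by omega⟩

open Classical in
def ccFinset (m : ℕ) : Finset (Finset Cell) :=
  (Icc ((0 : ℤ), (0 : ℤ)) ((m : ℤ), (m : ℤ))).powerset.filter
    (fun Q => IsPolyomino Q ∧ ColumnConvex Q ∧ Normalized Q ∧ Q.card = m)

open Classical in
lemma mem_ccFinset {m : ℕ} {Q : Finset Cell} :
    Q ∈ ccFinset m ↔ IsPolyomino Q ∧ ColumnConvex Q ∧ Normalized Q ∧ Q.card = m := by
  rw [ccFinset, mem_filter, mem_powerset]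
  exact ⟨And.right, fun h => ⟨h.2.2.2 ▸ h.1.subset_Icc h.2.2.1, h⟩⟩

open Classical in
lemma ccCountHt_eq_card (m j : ℕ) :
    ccCountHt m j = ((ccFinset m).filter (fun Q => heightN (lastCol Q) = j)).card := by
  rw [ccCountHt, ← Nat.card_eq_finsetCard]
  exact Nat.card_congr (Equiv.subtypeEquivRight fun Q => by
    simp only [mem_filter, mem_ccFinset]
    tauto)

lemma natCard_markedCC (m : ℕ) :
    Nat.card (markedCC m) = ∑ j ∈ range (m + 1), j * ccCountHt m j := by
  classical
  have hsigma : Nat.card (markedCC m) = ((ccFinset m).sigma lastCol).card := by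
    rw [← Nat.card_eq_finsetCard]
    exact Nat.card_congr
      { toFun := fun qc =>
          ⟨⟨qc.1.1, qc.1.2⟩, mem_sigma.mpr ⟨mem_ccFinset.mpr qc.2.1, qc.2.2⟩⟩
        invFun := fun qc => ⟨(qc.1.1, qc.1.2), mem_ccFinset.mp (mem_sigma.mp qc.2).1,
          (mem_sigma.mp qc.2).2⟩ }
  have hheight : ∀ Q ∈ ccFinset m, (lastCol Q).card = heightN (lastCol Q) := fun Q hQ => by
    obtain ⟨hP, hcc, -, -⟩ := mem_ccFinset.mp hQ
    exact card_eq_heightN (lastCol_nonempty hP.1) (hcc _ (lastCol_nonempty hP.1))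
  have hle : ∀ Q ∈ ccFinset m, heightN (lastCol Q) ∈ range (m + 1) := fun Q hQ => by
    obtain ⟨-, -, -, hcard⟩ := mem_ccFinset.mp hQ
    rw [mem_range, Nat.lt_succ_iff, ← hheight Q hQ, ← hcard]
    exact card_image_le.trans (card_filter_le _ _)
  rw [hsigma, card_sigma, sum_congr rfl hheight, ← sum_fiberwise_of_maps_to hle]
  refine sum_congr rfl fun j _ => ?_
  rw [sum_congr rfl fun Q hQ => (mem_filter.mp hQ).2, sum_const, smul_eq_mul, mul_comm,
    ccCountHt_eq_card]

lemma coeff_B1 (n : ℕ) :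
    PowerSeries.coeff n B1 = ∑ j ∈ range (n + 1), (j * ccCountHt n j : ℚ) := by
  simp only [B1, Aser, PowerSeries.coeff_mk, map_sum, Polynomial.eval_finsetSum,
    Polynomial.derivative_C_mul_X_pow, Polynomial.eval_mul, Polynomial.eval_C,
    Polynomial.eval_pow, Polynomial.eval_X, one_pow, mul_one]
  exact sum_congr rfl fun j _ => by ring

end Counting

section GeneratingFunction

lemma ccGammaCount_zero_right (n : ℕ) : ccGammaCount n 0 = 0 :=
  Nat.card_eq_zero.mpr <| .inl ⟨fun P => by
    obtain ⟨hP, -, -, -, -, h0, -⟩ := P.2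
    have := one_le_heightN (lastCol_nonempty hP.1)
    omega⟩

lemma ccGammaCount_eq_coeff_B1 {n k : ℕ} (hk : 1 ≤ k) (hkn : k ≤ n) :
    (ccGammaCount n k : ℚ) = PowerSeries.coeff (n - k) B1 := by
  rw [ccGammaCount_eq_natCard_markedCC hk hkn, natCard_markedCC, coeff_B1]
  push_cast
  rfl

lemma ccGammaCount_succ_succ {n k : ℕ} (hk : k ≤ n) :
    (ccGammaCount (n + 1) (k + 1) : ℚ) =
      ccGammaCount n k + if k = 0 then PowerSeries.coeff n B1 else 0 := by
  rw [ccGammaCount_eq_coeff_B1 le_add_self (by omega)]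
  rcases Nat.eq_zero_or_pos k with rfl | hk0
  · simp [ccGammaCount_zero_right]
  · rw [ccGammaCount_eq_coeff_B1 hk0 hk, if_neg hk0.ne', add_zero, Nat.add_sub_add_right]

lemma coeff_succ_qp_mul_tp_mul (f : PowerSeries (Polynomial ℚ)) (n : ℕ) :
    PowerSeries.coeff (n + 1) (qp * tp * f) = Polynomial.X * PowerSeries.coeff n f := by
  rw [qp, tp, mul_assoc, PowerSeries.coeff_succ_X_mul, PowerSeries.coeff_C_mul]

lemma coeff_zero_qp_mul_tp_mul (f : PowerSeries (Polynomial ℚ)) :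
    PowerSeries.coeff 0 (qp * tp * f) = 0 := by
  rw [qp, mul_assoc, PowerSeries.coeff_zero_X_mul]

end GeneratingFunction

/-- `(1 − qt)·A_γ = qt·B₁` in `(ℚ[t])⟦q⟧`. -/
theorem stmt_11 :
    (1 - qp * tp) * Agamma = qp * tp * liftP B1 := by
  ext (_ | n) <;> rw [sub_mul, one_mul, map_sub]
  · simp [coeff_zero_qp_mul_tp_mul, Agamma, ccGammaCount_zero_right]
  rw [coeff_succ_qp_mul_tp_mul, coeff_succ_qp_mul_tp_mul, liftP, PowerSeries.coeff_map,
    Agamma, PowerSeries.coeff_mk, PowerSeries.coeff_mk, sum_range_succ', ccGammaCount_zero_right]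
  have hterm : ∀ k ∈ range (n + 1),
      Polynomial.C (ccGammaCount (n + 1) (k + 1) : ℚ) * Polynomial.X ^ (k + 1) =
        Polynomial.X * (Polynomial.C (ccGammaCount n k : ℚ) * Polynomial.X ^ k) +
          if k = 0 then Polynomial.X * Polynomial.C (PowerSeries.coeff n B1) else 0 := by
    intro k hk
    rw [ccGammaCount_succ_succ (Nat.lt_succ_iff.mp (mem_range.mp hk))]
    rcases eq_or_ne k 0 with rfl | hk0
    · simp only [if_true, map_add]; ring
    · simp only [if_neg hk0, map_add, map_zero]; ring
  rw [sum_congr rfl hterm, sum_add_distrib, ← mul_sum, sum_ite_eq' (range (n + 1)) 0]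
  simp
end
end
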